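/- arXiv:2012.05002 — 2 statements merged into one kernel-verified Lean document; each statement's English description precedes it below -/
import Mathlib

section
/- Existence of a near-optimal ε-persuasive public signaling scheme supported on q-uniform posteriors: let Θ be a finite state set with prior μ ∈ Δ(Θ), R a finite set of receivers with net utilities u_r : Θ → [−1,1], and let g = {g_θ} and h = {h_θ} be families of functions g_θ, h_θ : {c0,c1}^R → [0,1] with g_θ β-stable compared with h_θ for every θ, for some β > 0. Let ε > 0, η ∈ (0,1], and let q be a positive integer with q ≥ 32·log(4/(η·min{1, 1/β}))/ε². Then there exists a probability distribution γ_ε supported on the set 𝒬 of q-uniform posteriors with Σ_{p∈𝒬} (γ_ε)_p·p = μ (Bayes plausibility) such that Σ_{p∈𝒬} (γ_ε)_p · max_{c ∈ F_ε(p)} Σ_θ p_θ·g_θ(c) ≥ (1−η) · sup_γ Σ_p γ_p · max_{c ∈ F(p)} Σ_θ p_θ·h_θ(c), where the supremum is over all finitely supported probability distributions γ over Δ(Θ) satisfying Σ_p γ_p·p = μ. -/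
open Finset

/-- The persuasive feasible set `F(p)`: profiles where every receiver with strictly positive
expected net utility votes `c0` (`true`) and every receiver with strictly negative expected
net utility votes `c1` (`false`). -/
def Fpers {Θ R : Type*} [Fintype Θ] (u : R → Θ → ℝ) (p : Θ → ℝ) : Set (R → Bool) :=
  {c | (∀ r, 0 < ∑ θ, p θ * u r θ → c r = true) ∧
       (∀ r, ∑ θ, p θ * u r θ < 0 → c r = false)}

/-- The `ε`-persuasive feasible set `F_ε(p)`. -/
def Feps {Θ R : Type*} [Fintype Θ] (u : R → Θ → ℝ) (ε : ℝ) (p : Θ → ℝ) : Set (R → Bool) :=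
  {c | (∀ r, ε < ∑ θ, p θ * u r θ → c r = true) ∧
       (∀ r, ∑ θ, p θ * u r θ < -ε → c r = false)}

namespace NearOpt

set_option linter.unusedSectionVars false
set_option linter.unusedVariables false
variable {Θ : Type*} [Fintype Θ] [DecidableEq Θ]

noncomputable def Pw (p : Θ → ℝ) (q : ℕ) (ω : Fin q → Θ) : ℝ := ∏ j, p (ω j)

noncomputable def emp (q : ℕ) (ω : Fin q → Θ) (θ : Θ) : ℝ := (∑ i, if ω i = θ then (1:ℝ) else 0) / q

lemma Pw_nonneg {p : Θ → ℝ} (hp : ∀ θ, 0 ≤ p θ) {q : ℕ} (ω : Fin q → Θ) : 0 ≤ Pw p q ω :=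
  Finset.prod_nonneg fun j _ => hp _

lemma sum_Pw (p : Θ → ℝ) (hp1 : ∑ θ, p θ = 1) (q : ℕ) :
    ∑ ω : Fin q → Θ, Pw p q ω = 1 := by
  have h := Finset.prod_univ_sum (fun _ : Fin q => (univ : Finset Θ)) (fun _ θ => p θ)
  rw [Fintype.piFinset_univ] at h
  simp only [Pw]
  rw [← h, hp1, Finset.prod_const_one]

lemma emp_nonneg (q : ℕ) (ω : Fin q → Θ) (θ : Θ) : 0 ≤ emp q ω θ := by
  apply div_nonneg _ (Nat.cast_nonneg q)
  exact Finset.sum_nonneg fun i _ => by positivity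

lemma emp_pairing (q : ℕ) (ω : Fin q → Θ) (f : Θ → ℝ) :
    ∑ θ, emp q ω θ * f θ = (∑ i, f (ω i)) / q := by
  simp only [emp, div_mul_eq_mul_div, ← Finset.sum_div]
  congr 1
  simp only [Finset.sum_mul]
  rw [Finset.sum_comm]
  congr 1; ext i
  simp [ite_mul, Finset.sum_ite_eq']

lemma emp_sum {q : ℕ} (hq : 0 < q) (ω : Fin q → Θ) : ∑ θ, emp q ω θ = 1 := by
  have := emp_pairing q ω (fun _ => 1)
  simp only [mul_one] at this
  rw [this]
  simp [div_eq_iff (by exact_mod_cast hq.ne' : (q:ℝ) ≠ 0)]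

lemma Pw_update (p : Θ → ℝ) {q : ℕ} (ω : Fin q → Θ) (i : Fin q) (θ : Θ) :
    Pw p q (Function.update ω i θ) * p (ω i) = Pw p q ω * p θ := by
  have h1 : Pw p q (Function.update ω i θ) = p θ * ∏ j ∈ univ.erase i, p (ω j) := by
    have e : (fun j => p (Function.update ω i θ j)) = Function.update (fun j => p (ω j)) i (p θ) := by
      funext j
      by_cases hj : j = i <;> simp [hj, Function.update]
    simp only [Pw]
    rw [show (∏ j, p (Function.update ω i θ j)) = ∏ j, Function.update (fun j => p (ω j)) i (p θ) j from by rw [e]]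
    rw [Finset.prod_update_of_mem (Finset.mem_univ i)]
    congr 1
    rw [Finset.sdiff_singleton_eq_erase]
  have h2 : Pw p q ω = p (ω i) * ∏ j ∈ univ.erase i, p (ω j) :=
    (Finset.mul_prod_erase univ _ (Finset.mem_univ i)).symm
  rw [h1, h2]; ring

lemma key (p : Θ → ℝ) (hp1 : ∑ θ, p θ = 1) {q : ℕ} (i : Fin q) (H : Θ → (Fin q → Θ) → ℝ) :
    ∑ ω : Fin q → Θ, Pw p q ω * H (ω i) ω
      = ∑ θ, p θ * ∑ ω : Fin q → Θ, Pw p q ω * H θ (Function.update ω i θ) := by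
  have main : ∑ x ∈ (univ : Finset Θ) ×ˢ (univ : Finset (Fin q → Θ)),
      p x.1 * (Pw p q x.2 * H x.1 (Function.update x.2 i x.1))
      = ∑ x ∈ (univ : Finset Θ) ×ˢ (univ : Finset (Fin q → Θ)),
      p x.1 * (Pw p q x.2 * H (x.2 i) x.2) := by
    refine Finset.sum_nbij' (fun x => (x.2 i, Function.update x.2 i x.1))
      (fun x => (x.2 i, Function.update x.2 i x.1)) ?_ ?_ ?_ ?_ ?_
    · intro a _; simp
    · intro a _; simp
    · intro a _
      simp [Function.update_idem, Function.update_self, Function.update_eq_self]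
    · intro a _
      simp [Function.update_idem, Function.update_self, Function.update_eq_self]
    · intro a _
      simp only [Function.update_self, Function.update_idem, Function.update_eq_self]
      have h := Pw_update p a.2 i a.1
      linear_combination (-(H a.1 (Function.update a.2 i a.1))) * h
  rw [Finset.sum_product, Finset.sum_product] at main
  symm
  calc ∑ θ, p θ * ∑ ω : Fin q → Θ, Pw p q ω * H θ (Function.update ω i θ)
      = ∑ θ, ∑ ω : Fin q → Θ, p θ * (Pw p q ω * H θ (Function.update ω i θ)) := by
        simp [Finset.mul_sum]
    _ = ∑ θ, ∑ ω : Fin q → Θ, p θ * (Pw p q ω * H (ω i) ω) := main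
    _ = ∑ θ, p θ * ∑ ω : Fin q → Θ, Pw p q ω * H (ω i) ω := by simp [Finset.mul_sum]
    _ = (∑ θ, p θ) * ∑ ω : Fin q → Θ, Pw p q ω * H (ω i) ω := by rw [Finset.sum_mul]
    _ = ∑ ω : Fin q → Θ, Pw p q ω * H (ω i) ω := by rw [hp1, one_mul]




lemma exp_quad {x : ℝ} (hx : |x| ≤ 1) : Real.exp x ≤ 1 + x + x ^ 2 := by
  have h := Real.exp_bound hx (by norm_num : 0 < 3)
  have h2 : Real.exp x - (1 + x + x ^ 2 / 2) ≤ |x| ^ 3 * (4 / (6 * 3)) := by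
    have hh := abs_le.mp h
    have e : ∑ m ∈ range 3, x ^ m / (m.factorial : ℝ) = 1 + x + x ^ 2 / 2 := by
      rw [Finset.sum_range_succ, Finset.sum_range_succ, Finset.sum_range_succ,
        Finset.sum_range_zero]
      norm_num [Nat.factorial]
    rw [e] at hh
    have e4 : (4:ℝ) / (6 * 3) = ↑(Nat.succ 3) / (↑(Nat.factorial 3) * ↑3) := by
      norm_num [Nat.factorial]
    rw [e4]; exact hh.2
  have h3 : |x| ^ 3 ≤ x ^ 2 := by
    have e2 : |x| ^ 3 = |x| * x ^ 2 := by
      rw [pow_succ, sq_abs]; ring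
    rw [e2]
    nlinarith [abs_nonneg x, sq_nonneg x]
  nlinarith [sq_nonneg x]

lemma tail (p : Θ → ℝ) (hp0 : ∀ θ, 0 ≤ p θ) (hp1 : ∑ θ, p θ = 1) {q : ℕ} (i : Fin q)
    (v : Θ → ℝ) (hv2 : ∀ θ, |v θ| ≤ 2) (hm : ∑ θ, p θ * v θ = 0)
    (hvar : ∑ θ, p θ * v θ ^ 2 ≤ 1) (lam t : ℝ) (hl0 : 0 ≤ lam) (hl : lam ≤ 1 / 2) :
    ∑ ω ∈ univ.filter (fun ω : Fin q → Θ => t ≤ ∑ j ∈ univ.erase i, v (ω j)), Pw p q ω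
      ≤ Real.exp (lam ^ 2 * q - lam * t) := by
  classical
  set S : (Fin q → Θ) → ℝ := fun ω => ∑ j ∈ univ.erase i, v (ω j) with hS
  set E : Fin q → Θ → ℝ := fun j x => if j = i then 1 else Real.exp (lam * v x) with hE
  have hEnn : ∀ j x, 0 ≤ E j x := by
    intro j x; by_cases hj : j = i <;> simp [hE, hj, Real.exp_nonneg]
  -- pointwise identity
  have hid : ∀ ω : Fin q → Θ, Pw p q ω * Real.exp (lam * (S ω - t))
      = Real.exp (-(lam * t)) * ∏ j, (p (ω j) * E j (ω j)) := by
    intro ω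
    have e1 : Real.exp (lam * (S ω - t)) = Real.exp (-(lam * t)) * Real.exp (lam * S ω) := by
      rw [← Real.exp_add]; ring_nf
    have e2 : Real.exp (lam * S ω) = ∏ j ∈ univ.erase i, Real.exp (lam * v (ω j)) := by
      rw [← Real.exp_sum, hS, Finset.mul_sum]
    have e3 : ∏ j, E j (ω j) = ∏ j ∈ univ.erase i, Real.exp (lam * v (ω j)) := by
      rw [← Finset.mul_prod_erase univ (fun j => E j (ω j)) (Finset.mem_univ i)]
      rw [show E i (ω i) = 1 from by simp [hE]]
      rw [one_mul]
      exact Finset.prod_congr rfl fun j hj => by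
        simp [hE, (Finset.mem_erase.mp hj).1]
    rw [e1, e2, ← e3, Finset.prod_mul_distrib, Pw]; ring
  calc ∑ ω ∈ univ.filter (fun ω : Fin q → Θ => t ≤ S ω), Pw p q ω
      ≤ ∑ ω ∈ univ.filter (fun ω : Fin q → Θ => t ≤ S ω), Pw p q ω * Real.exp (lam * (S ω - t)) := by
        refine Finset.sum_le_sum fun ω hω => ?_
        have hSω := (Finset.mem_filter.mp hω).2
        have h1 : (1:ℝ) ≤ Real.exp (lam * (S ω - t)) := by
          rw [show (1:ℝ) = Real.exp 0 from (Real.exp_zero).symm]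
          exact Real.exp_le_exp.mpr (by nlinarith)
        nlinarith [Pw_nonneg hp0 ω (p := p) (q := q), h1]
    _ ≤ ∑ ω : Fin q → Θ, Pw p q ω * Real.exp (lam * (S ω - t)) := by
        refine Finset.sum_le_sum_of_subset_of_nonneg (Finset.filter_subset _ _) fun ω _ _ => ?_
        exact mul_nonneg (Pw_nonneg hp0 ω) (Real.exp_nonneg _)
    _ = Real.exp (-(lam * t)) * ∑ ω : Fin q → Θ, ∏ j, (p (ω j) * E j (ω j)) := by
        rw [Finset.mul_sum]
        exact Finset.sum_congr rfl fun ω _ => hid ω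
    _ = Real.exp (-(lam * t)) * ∏ j, ∑ x, p x * E j x := by
        congr 1
        have h := Finset.prod_univ_sum (fun _ : Fin q => (univ : Finset Θ))
          (fun j x => p x * E j x)
        rw [Fintype.piFinset_univ] at h
        rw [← h]
    _ ≤ Real.exp (-(lam * t)) * ∏ j : Fin q, Real.exp (lam ^ 2) := by
        refine mul_le_mul_of_nonneg_left ?_ (Real.exp_nonneg _)
        refine Finset.prod_le_prod (fun j _ => Finset.sum_nonneg fun x _ =>
          mul_nonneg (hp0 x) (hEnn j x)) fun j _ => ?_
        by_cases hj : j = i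
        · simp only [hE, hj, if_pos rfl, mul_one, hp1]
          have := Real.add_one_le_exp (lam ^ 2)
          nlinarith [sq_nonneg lam]
        · simp only [hE, if_neg hj]
          have step : ∑ x, p x * Real.exp (lam * v x)
              ≤ ∑ x, p x * (1 + lam * v x + (lam * v x) ^ 2) := by
            refine Finset.sum_le_sum fun x _ => ?_
            refine mul_le_mul_of_nonneg_left ?_ (hp0 x)
            refine exp_quad ?_
            rw [abs_mul, abs_of_nonneg hl0]
            nlinarith [hv2 x, abs_nonneg (v x)]
          have expand : ∑ x, p x * (1 + lam * v x + (lam * v x) ^ 2)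
              = (∑ x, p x) + lam * (∑ x, p x * v x) + lam ^ 2 * ∑ x, p x * v x ^ 2 := by
            rw [Finset.mul_sum, Finset.mul_sum, ← Finset.sum_add_distrib,
              ← Finset.sum_add_distrib]
            exact Finset.sum_congr rfl fun x _ => by ring
          rw [expand, hp1, hm] at step
          have last : 1 + lam * 0 + lam ^ 2 * ∑ x, p x * v x ^ 2 ≤ Real.exp (lam ^ 2) := by
            have := Real.add_one_le_exp (lam ^ 2)
            nlinarith [sq_nonneg lam]
          linarith
    _ = Real.exp (lam ^ 2 * q - lam * t) := by
        rw [Finset.prod_const, ← Real.exp_nat_mul, ← Real.exp_add, Finset.card_univ,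
          Fintype.card_fin]
        ring_nf

variable {R : Type*} [Fintype R] [DecidableEq R]

/-- weighted averages of `[-1,1]`-bounded functions are in `[-1,1]`. -/
lemma abs_avg_le (w : Θ → ℝ) (hw0 : ∀ θ, 0 ≤ w θ) (hw1 : ∑ θ, w θ = 1)
    (f : Θ → ℝ) (hf : ∀ θ, |f θ| ≤ 1) : |∑ θ, w θ * f θ| ≤ 1 := by
  calc |∑ θ, w θ * f θ| ≤ ∑ θ, |w θ * f θ| := Finset.abs_sum_le_sum_abs _ _
    _ ≤ ∑ θ, w θ := by
        refine Finset.sum_le_sum fun θ _ => ?_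
        rw [abs_mul, abs_of_nonneg (hw0 θ)]
        nlinarith [hw0 θ, hf θ, abs_nonneg (f θ)]
    _ = 1 := hw1

noncomputable def ctil (u : R → Θ → ℝ) (ε : ℝ) (q : ℕ) (c : R → Bool) (ω : Fin q → Θ) :
    R → Bool :=
  fun r => if ε < ∑ θ, emp q ω θ * u r θ then true
    else if (∑ θ, emp q ω θ * u r θ) < -ε then false else c r

lemma ctil_mem (u : R → Θ → ℝ) {ε : ℝ} (hε : 0 < ε) (q : ℕ) (c : R → Bool) (ω : Fin q → Θ) :
    ctil u ε q c ω ∈ Feps u ε (emp q ω) := by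
  constructor
  · intro r hr; simp [ctil, if_pos hr]
  · intro r hr
    have h1 : ¬ (ε < ∑ θ, emp q ω θ * u r θ) := by
      push_neg; linarith
    simp [ctil, if_neg h1, if_pos hr]

lemma ctil_flip {u : R → Θ → ℝ} {ε : ℝ} {q : ℕ} {c : R → Bool} {ω : Fin q → Θ} {r : R}
    {p : Θ → ℝ} (hε : 0 < ε) (hc : c ∈ Fpers u p) (hflip : ctil u ε q c ω r ≠ c r) :
    ε < |(∑ θ, emp q ω θ * u r θ) - ∑ θ, p θ * u r θ| := by
  set s := ∑ θ, emp q ω θ * u r θ with hs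
  set m := ∑ θ, p θ * u r θ with hm
  by_cases h1 : ε < s
  · have hct : ctil u ε q c ω r = true := by simp [ctil, ← hs, if_pos h1]
    have hcr : c r = false := by
      rw [hct] at hflip
      exact Bool.not_eq_true _ ▸ (by simpa using hflip.symm)
    have hm0 : m ≤ 0 := by
      by_contra hmpos
      push_neg at hmpos
      rw [hc.1 r hmpos] at hcr
      simp at hcr
    rw [abs_of_pos (by linarith)]
    linarith
  · by_cases h2 : s < -ε
    · have hct : ctil u ε q c ω r = false := by simp [ctil, ← hs, if_neg h1, if_pos h2]
      have hcr : c r = true := by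
        rw [hct] at hflip
        simpa using hflip.symm
      have hm0 : 0 ≤ m := by
        by_contra hmneg
        push_neg at hmneg
        rw [hc.2 r hmneg] at hcr
        simp at hcr
      rw [abs_of_neg (by linarith)]
      linarith
    · exfalso
      exact hflip (by simp [ctil, ← hs, if_neg h1, if_neg h2])


lemma numeric {β ε η : ℝ} (hβ : 0 < β) (hε : 0 < ε) (hε2 : ε ≤ 2)
    (hη : η ∈ Set.Ioc (0:ℝ) 1) {q : ℕ}
    (hq2 : 32 * Real.log (4 / (η * min 1 (1 / β))) / ε ^ 2 ≤ q) :
    2 * Real.exp ((ε / 4) ^ 2 * q - (ε / 4) * (q * ε - 2)) ≤ η * min 1 (1 / β) / 2 := by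
  set x := η * min 1 (1 / β) with hx
  have hx0 : 0 < x := mul_pos hη.1 (lt_min one_pos (by positivity))
  have hx1 : x ≤ 1 := by
    calc x ≤ 1 * 1 := mul_le_mul hη.2 (min_le_left _ _) (le_of_lt (lt_min one_pos (by positivity))) one_pos.le
      _ = 1 := mul_one 1
  set L := Real.log (4 / x) with hL
  have hL1 : 1 < L := by
    rw [hL]
    refine lt_of_lt_of_le ?_ (Real.log_le_log (by norm_num) (by
      rw [le_div_iff₀ hx0]
      nlinarith : (4:ℝ) ≤ 4 / x))
    rw [Real.lt_log_iff_exp_lt (by norm_num : (0:ℝ) < 4)]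
    calc Real.exp 1 < 2.7182818286 := Real.exp_one_lt_d9
      _ < 4 := by norm_num
  have hqe : 32 * L ≤ q * ε ^ 2 := by
    rw [div_le_iff₀ (by positivity : (0:ℝ) < ε ^ 2)] at hq2
    linarith [hq2]
  have hexp : (ε / 4) ^ 2 * q - (ε / 4) * (q * ε - 2) ≤ -L := by
    have expand : (ε / 4) ^ 2 * q - (ε / 4) * (q * ε - 2)
        = -(3 / 16) * (q * ε ^ 2) + ε / 2 := by ring
    rw [expand]
    nlinarith [hqe, hL1, hε2]
  have hexpL : Real.exp (-L) = x / 4 := by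
    rw [hL, ← Real.log_inv, Real.exp_log (by positivity : (0:ℝ) < (4 / x)⁻¹)]
    rw [inv_div]
  calc 2 * Real.exp ((ε / 4) ^ 2 * q - (ε / 4) * (q * ε - 2))
      ≤ 2 * Real.exp (-L) := by
        have := Real.exp_le_exp.mpr hexp
        linarith
    _ = x / 2 := by rw [hexpL]; ring

lemma noise (p : Θ → ℝ) (hp0 : ∀ θ, 0 ≤ p θ) (hp1 : ∑ θ, p θ = 1)
    (u : R → Θ → ℝ) (hu : ∀ r θ, u r θ ∈ Set.Icc (-1 : ℝ) 1)
    {β ε η : ℝ} (hβ : 0 < β) (hε : 0 < ε) (hη : η ∈ Set.Ioc (0:ℝ) 1)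
    {q : ℕ} (hq : 0 < q)
    (hq2 : 32 * Real.log (4 / (η * min 1 (1 / β))) / ε ^ 2 ≤ q)
    (c : R → Bool) (hc : c ∈ Fpers u p) (i : Fin q) (θ : Θ) (r : R) :
    ∑ ω ∈ univ.filter (fun ω : Fin q → Θ => ctil u ε q c (Function.update ω i θ) r ≠ c r), Pw p q ω
      ≤ η * min 1 (1 / β) / 2 := by
  have hx0 : 0 < η * min 1 (1 / β) := mul_pos hη.1 (lt_min one_pos (by positivity))
  set m := ∑ θ', p θ' * u r θ' with hm
  have hm1 : |m| ≤ 1 := abs_avg_le p hp0 hp1 _ fun θ' => abs_le.mpr (hu r θ')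
  set FS := univ.filter (fun ω : Fin q → Θ => ctil u ε q c (Function.update ω i θ) r ≠ c r) with hFS
  have hdev : ∀ ww : Fin q → Θ,
      (∑ θ', emp q ww θ' * u r θ') - m = (∑ j, (u r (ww j) - m)) / q := by
    intro ww
    rw [emp_pairing]
    rw [Finset.sum_sub_distrib, Finset.sum_const, Finset.card_univ, Fintype.card_fin, nsmul_eq_mul]
    field_simp
  by_cases hε2 : ε ≤ 2
  · -- Chernoff case
    set v1 : Θ → ℝ := fun θ' => u r θ' - m with hv1
    have hv1b : ∀ θ', |v1 θ'| ≤ 2 := by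
      intro θ'
      have h1 := (hu r θ').1
      have h2 := (hu r θ').2
      have h3 := abs_le.mp hm1
      simp only [hv1]
      rw [abs_le]
      constructor <;> [linarith [h3.2]; linarith [h3.1]]
    have hv1m : ∑ θ', p θ' * v1 θ' = 0 := by
      simp only [hv1, mul_sub, Finset.sum_sub_distrib, ← Finset.sum_mul, hp1, ← hm]
      ring
    have hv1var : ∑ θ', p θ' * v1 θ' ^ 2 ≤ 1 := by
      have e : ∑ θ', p θ' * v1 θ' ^ 2
          = ∑ θ', (p θ' * u r θ' ^ 2 - 2 * m * (p θ' * u r θ') + m ^ 2 * p θ') :=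
        Finset.sum_congr rfl fun θ' _ => by simp only [hv1]; ring
      rw [e, Finset.sum_add_distrib, Finset.sum_sub_distrib, ← Finset.mul_sum, ← Finset.mul_sum,
        ← hm, hp1]
      have h2 : ∑ θ', p θ' * u r θ' ^ 2 ≤ 1 := by
        calc ∑ θ', p θ' * u r θ' ^ 2 ≤ ∑ θ', p θ' := by
              refine Finset.sum_le_sum fun θ' _ => ?_
              nlinarith [mul_nonneg (hp0 θ') (mul_nonneg
                (by linarith [(hu r θ').1] : (0:ℝ) ≤ 1 + u r θ')
                (by linarith [(hu r θ').2] : (0:ℝ) ≤ 1 - u r θ'))]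
          _ = 1 := hp1
      nlinarith [sq_nonneg m]
    set t : ℝ := q * ε - 2 with ht
    set A := univ.filter (fun ω : Fin q → Θ => t ≤ ∑ j ∈ univ.erase i, v1 (ω j)) with hA
    set B := univ.filter (fun ω : Fin q → Θ => t ≤ ∑ j ∈ univ.erase i, -(v1 (ω j))) with hB
    have hsubset : FS ⊆ A ∪ B := by
      intro ω hω
      have hflip := (Finset.mem_filter.mp hω).2
      have hdev2 := ctil_flip hε hc hflip
      set ww := Function.update ω i θ with hww
      rw [hdev ww] at hdev2
      have hq0 : (0:ℝ) < q := by exact_mod_cast hq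
      have habs : q * ε < |∑ j, (u r (ww j) - m)| := by
        rw [abs_div, abs_of_pos hq0, lt_div_iff₀ hq0] at hdev2
        nlinarith [hdev2]
      have hsplit : ∑ j, (u r (ww j) - m)
          = (u r θ - m) + ∑ j ∈ univ.erase i, v1 (ω j) := by
        rw [← Finset.add_sum_erase univ (fun j => u r (ww j) - m) (Finset.mem_univ i)]
        congr 1
        · rw [hww]; simp
        · refine Finset.sum_congr rfl fun j hj => ?_
          rw [hww, Function.update_of_ne (Finset.mem_erase.mp hj).1]
      have hub : |u r θ - m| ≤ 2 := by
        have h3 := abs_le.mp hm1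
        rw [abs_le]
        constructor <;> [linarith [(hu r θ).1, h3.2]; linarith [(hu r θ).2, h3.1]]
      have hbig : t < |∑ j ∈ univ.erase i, v1 (ω j)| := by
        rw [hsplit] at habs
        have htri : |(u r θ - m) + ∑ j ∈ univ.erase i, v1 (ω j)|
            ≤ |u r θ - m| + |∑ j ∈ univ.erase i, v1 (ω j)| := abs_add_le _ _
        simp only [ht]
        linarith [habs, hub, htri]
      rw [Finset.mem_union]
      rcases lt_abs.mp hbig with h | h
      · left
        exact Finset.mem_filter.mpr ⟨Finset.mem_univ _, h.le⟩
      · right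
        refine Finset.mem_filter.mpr ⟨Finset.mem_univ _, ?_⟩
        rw [← Finset.sum_neg_distrib] at h
        exact h.le
    have hAle : ∑ ω ∈ A, Pw p q ω ≤ Real.exp ((ε / 4) ^ 2 * q - (ε / 4) * t) := by
      rw [hA]
      exact tail p hp0 hp1 i v1 hv1b hv1m hv1var (ε / 4) t (by positivity) (by linarith)
    have hBle : ∑ ω ∈ B, Pw p q ω ≤ Real.exp ((ε / 4) ^ 2 * q - (ε / 4) * t) := by
      have hb1 : ∀ θ', |(-v1) θ'| ≤ 2 := fun θ' => by
        rw [Pi.neg_apply, abs_neg]; exact hv1b θ'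
      have hb2 : ∑ θ', p θ' * (-v1) θ' = 0 := by
        simp only [Pi.neg_apply, mul_neg]
        rw [Finset.sum_neg_distrib, hv1m, neg_zero]
      have hb3 : ∑ θ', p θ' * (-v1) θ' ^ 2 ≤ 1 := by
        simp only [Pi.neg_apply, neg_sq]
        exact hv1var
      have := tail p hp0 hp1 i (-v1) hb1 hb2 hb3 (ε / 4) t (by positivity) (by linarith)
      rw [hB]
      convert this using 3
      simp only [Pi.neg_apply]
    have hsum : ∑ ω ∈ FS, Pw p q ω ≤ 2 * Real.exp ((ε / 4) ^ 2 * q - (ε / 4) * t) := by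
      have h1 : ∑ ω ∈ FS, Pw p q ω ≤ ∑ ω ∈ A ∪ B, Pw p q ω :=
        Finset.sum_le_sum_of_subset_of_nonneg hsubset fun ω _ _ => Pw_nonneg hp0 ω
      have h2 := Finset.sum_union_inter (s₁ := A) (s₂ := B) (f := Pw p q)
      have h3 : 0 ≤ ∑ ω ∈ A ∩ B, Pw p q ω := Finset.sum_nonneg fun ω _ => Pw_nonneg hp0 ω
      linarith [hAle, hBle]
    calc ∑ ω ∈ FS, Pw p q ω ≤ 2 * Real.exp ((ε / 4) ^ 2 * q - (ε / 4) * t) := hsum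
      _ = 2 * Real.exp ((ε / 4) ^ 2 * q - (ε / 4) * (q * ε - 2)) := by rw [ht]
      _ ≤ η * min 1 (1 / β) / 2 := numeric hβ hε hε2 hη hq2
  · -- ε > 2 : no flips possible
    push_neg at hε2
    have hempty : FS = ∅ := by
      rw [hFS]
      refine Finset.filter_eq_empty_iff.mpr fun {ω} _ => ?_
      intro hflip
      have hdev2 := ctil_flip hε hc hflip
      set ww := Function.update ω i θ with hww
      have hs1 : |∑ θ', emp q ww θ' * u r θ'| ≤ 1 :=
        abs_avg_le (emp q ww) (emp_nonneg q ww) (emp_sum hq ww) _ fun θ' => abs_le.mpr (hu r θ')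
      have hd : |(∑ θ', emp q ww θ' * u r θ') - m| ≤ 2 := by
        have a1 := abs_le.mp hs1
        have a2 := abs_le.mp hm1
        rw [abs_le]
        constructor <;> [linarith [a1.1, a2.2]; linarith [a1.2, a2.1]]
      linarith
    rw [hempty, Finset.sum_empty]
    positivity


lemma main_per_posterior (p : Θ → ℝ) (hp0 : ∀ θ, 0 ≤ p θ) (hp1 : ∑ θ, p θ = 1)
    (u : R → Θ → ℝ) (hu : ∀ r θ, u r θ ∈ Set.Icc (-1 : ℝ) 1)
    (g h : Θ → (R → Bool) → ℝ)
    (hg01 : ∀ θ c, g θ c ∈ Set.Icc (0 : ℝ) 1) (hh01 : ∀ θ c, h θ c ∈ Set.Icc (0 : ℝ) 1)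
    {β : ℝ} (hβ : 0 < β)
    (hstab : ∀ θ (c : R → Bool) (α : ℝ), α ∈ Set.Ioc (0 : ℝ) 1 →
      ∀ y : (R → Bool) → ℝ, (∀ c', 0 ≤ y c') → (∑ c', y c' = 1) →
        (∀ r : R, ∑ c' ∈ univ.filter (fun c' : R → Bool => c' r ≠ c r), y c' ≤ α) →
        h θ c * (1 - α * β) ≤ ∑ c', y c' * g θ c')
    {ε η : ℝ} (hε : 0 < ε) (hη : η ∈ Set.Ioc (0 : ℝ) 1)
    {q : ℕ} (hq : 0 < q)
    (hq2 : 32 * Real.log (4 / (η * min 1 (1 / β))) / ε ^ 2 ≤ q)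
    (c : R → Bool) (hc : c ∈ Fpers u p) :
    (1 - η / 2) * ∑ θ, p θ * h θ c
      ≤ ∑ ω : Fin q → Θ, Pw p q ω *
          sSup ((fun c' => ∑ θ, emp q ω θ * g θ c') '' Feps u ε (emp q ω)) := by
  classical
  set α := η * min 1 (1 / β) / 2 with hα
  have hmin0 : 0 < min 1 (1 / β) := lt_min one_pos (by positivity)
  have hα0 : 0 < α := by
    rw [hα]; exact div_pos (mul_pos hη.1 hmin0) two_pos
  have hα1 : α ≤ 1 := by
    have h1 : α ≤ η / 2 := by
      rw [hα]
      have : η * min 1 (1 / β) ≤ η * 1 := mul_le_mul_of_nonneg_left (min_le_left _ _) hη.1.le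
      linarith
    linarith [hη.2]
  have hαβ : α * β ≤ η / 2 := by
    rw [hα]
    have h1 : min 1 (1 / β) * β ≤ 1 := by
      calc min 1 (1 / β) * β ≤ (1 / β) * β := mul_le_mul_of_nonneg_right (min_le_right _ _) hβ.le
        _ = 1 := by field_simp
    calc η * min 1 (1 / β) / 2 * β = η / 2 * (min 1 (1 / β) * β) := by ring
      _ ≤ η / 2 * 1 := mul_le_mul_of_nonneg_left h1 (by linarith [hη.1])
      _ = η / 2 := mul_one _
  -- step 5: per (i, θ) stability bound
  have step5 : ∀ (i : Fin q) (θ : Θ),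
      h θ c * (1 - η / 2) ≤ ∑ ω : Fin q → Θ, Pw p q ω * g θ (ctil u ε q c (Function.update ω i θ)) := by
    intro i θ
    set G : (Fin q → Θ) → (R → Bool) := fun ω => ctil u ε q c (Function.update ω i θ) with hG
    set y : (R → Bool) → ℝ := fun c' => ∑ ω ∈ univ.filter (fun ω => G ω = c'), Pw p q ω with hy
    have hynn : ∀ c', 0 ≤ y c' := fun c' => Finset.sum_nonneg fun ω _ => Pw_nonneg hp0 ω
    have hy1 : ∑ c', y c' = 1 := by
      rw [hy]
      rw [Finset.sum_fiberwise_of_maps_to (fun ω _ => Finset.mem_univ (G ω)) (Pw p q)]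
      exact sum_Pw p hp1 q
    have hynoise : ∀ r : R, ∑ c' ∈ univ.filter (fun c' : R → Bool => c' r ≠ c r), y c' ≤ α := by
      intro r
      have key2 : ∑ c' ∈ univ.filter (fun c' : R → Bool => c' r ≠ c r), y c'
          = ∑ ω ∈ univ.filter (fun ω : Fin q → Θ => G ω r ≠ c r), Pw p q ω := by
        rw [hy]
        rw [Finset.sum_fiberwise_eq_sum_filter]
        congr 1
        ext ω
        simp [Finset.mem_filter]
      rw [key2, hα]
      exact noise p hp0 hp1 u hu hβ hε hη hq hq2 c hc i θ r
    have hval : ∑ c', y c' * g θ c' = ∑ ω : Fin q → Θ, Pw p q ω * g θ (G ω) := by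
      rw [hy]
      simp only [Finset.sum_mul]
      rw [← Finset.sum_fiberwise_of_maps_to (fun ω _ => Finset.mem_univ (G ω))
        (fun ω => Pw p q ω * g θ (G ω))]
      refine Finset.sum_congr rfl fun c' _ => Finset.sum_congr rfl fun ω hω => ?_
      rw [(Finset.mem_filter.mp hω).2]
    have hs := hstab θ c α ⟨hα0, hα1⟩ y hynn hy1 hynoise
    rw [hval] at hs
    refine le_trans ?_ hs
    have hh0 := (hh01 θ c).1
    nlinarith [hαβ, hh0]
  -- step 1&2: pointwise sSup lower bound
  have step2 : ∑ ω : Fin q → Θ, Pw p q ω * ∑ θ, emp q ω θ * g θ (ctil u ε q c ω)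
      ≤ ∑ ω : Fin q → Θ, Pw p q ω *
        sSup ((fun c' => ∑ θ, emp q ω θ * g θ c') '' Feps u ε (emp q ω)) := by
    refine Finset.sum_le_sum fun ω _ => ?_
    refine mul_le_mul_of_nonneg_left ?_ (Pw_nonneg hp0 ω)
    refine le_csSup ?_ ?_
    · exact ((Set.toFinite (Feps u ε (emp q ω))).image _).bddAbove
    · exact Set.mem_image_of_mem _ (ctil_mem u hε q c ω)
  -- step 3&4: rewrite and conclude
  have step34 : (1 - η / 2) * ∑ θ, p θ * h θ c
      ≤ ∑ ω : Fin q → Θ, Pw p q ω * ∑ θ, emp q ω θ * g θ (ctil u ε q c ω) := by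
    have hq0 : (0:ℝ) < q := by exact_mod_cast hq
    have e1 : ∀ ω : Fin q → Θ, Pw p q ω * ∑ θ, emp q ω θ * g θ (ctil u ε q c ω)
        = (∑ i, Pw p q ω * g (ω i) (ctil u ε q c ω)) / q := by
      intro ω
      rw [emp_pairing q ω (fun θ => g θ (ctil u ε q c ω)), mul_div_assoc', Finset.mul_sum]
    have e2 : ∑ ω : Fin q → Θ, Pw p q ω * ∑ θ, emp q ω θ * g θ (ctil u ε q c ω)
        = (∑ i : Fin q, ∑ ω : Fin q → Θ, Pw p q ω * g (ω i) (ctil u ε q c ω)) / q := by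
      calc ∑ ω : Fin q → Θ, Pw p q ω * ∑ θ, emp q ω θ * g θ (ctil u ε q c ω)
          = ∑ ω : Fin q → Θ, (∑ i, Pw p q ω * g (ω i) (ctil u ε q c ω)) / q :=
            Finset.sum_congr rfl fun ω _ => e1 ω
        _ = (∑ ω : Fin q → Θ, ∑ i, Pw p q ω * g (ω i) (ctil u ε q c ω)) / q :=
            (Finset.sum_div _ _ _).symm
        _ = (∑ i : Fin q, ∑ ω : Fin q → Θ, Pw p q ω * g (ω i) (ctil u ε q c ω)) / q := by
            rw [Finset.sum_comm]
    have hkey : ∀ i : Fin q, ∑ ω : Fin q → Θ, Pw p q ω * g (ω i) (ctil u ε q c ω)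
        = ∑ θ, p θ * ∑ ω : Fin q → Θ, Pw p q ω * g θ (ctil u ε q c (Function.update ω i θ)) :=
      fun i => key p hp1 i (fun θ ω => g θ (ctil u ε q c ω))
    have hper : ∀ i : Fin q, ∑ θ, p θ * (h θ c * (1 - η / 2))
        ≤ ∑ ω : Fin q → Θ, Pw p q ω * g (ω i) (ctil u ε q c ω) := by
      intro i
      rw [hkey i]
      exact Finset.sum_le_sum fun θ _ => mul_le_mul_of_nonneg_left (step5 i θ) (hp0 θ)
    have sumbound : ∑ _i : Fin q, ∑ θ, p θ * (h θ c * (1 - η / 2))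
        ≤ ∑ i : Fin q, ∑ ω : Fin q → Θ, Pw p q ω * g (ω i) (ctil u ε q c ω) :=
      Finset.sum_le_sum fun i _ => hper i
    have lhseq : ∑ _i : Fin q, ∑ θ, p θ * (h θ c * (1 - η / 2))
        = q * ((1 - η / 2) * ∑ θ, p θ * h θ c) := by
      rw [Finset.sum_const, Finset.card_univ, Fintype.card_fin, nsmul_eq_mul]
      congr 1
      rw [Finset.mul_sum]
      exact Finset.sum_congr rfl fun θ _ => by ring
    rw [e2, le_div_iff₀ hq0]
    calc (1 - η / 2) * (∑ θ, p θ * h θ c) * q = q * ((1 - η / 2) * ∑ θ, p θ * h θ c) := by ring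
      _ = ∑ _i : Fin q, ∑ θ, p θ * (h θ c * (1 - η / 2)) := lhseq.symm
      _ ≤ ∑ i : Fin q, ∑ ω : Fin q → Θ, Pw p q ω * g (ω i) (ctil u ε q c ω) := sumbound
  exact le_trans step34 step2


lemma mean (p : Θ → ℝ) (hp1 : ∑ θ, p θ = 1) {q : ℕ} (hq : 0 < q) (θ : Θ) :
    ∑ ω : Fin q → Θ, Pw p q ω * emp q ω θ = p θ := by
  have e : ∀ ω : Fin q → Θ, Pw p q ω * emp q ω θ
      = (∑ i, Pw p q ω * (if ω i = θ then (1:ℝ) else 0)) / q := by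
    intro ω
    simp only [emp]
    rw [mul_div_assoc', Finset.mul_sum]
  rw [Finset.sum_congr rfl fun ω _ => e ω, ← Finset.sum_div, Finset.sum_comm]
  have per : ∀ i : Fin q,
      ∑ ω : Fin q → Θ, Pw p q ω * (if ω i = θ then (1:ℝ) else 0) = p θ := by
    intro i
    have k := key p hp1 i (fun θ' _ => if θ' = θ then (1:ℝ) else 0)
    rw [k]
    have e2 : ∀ θ', ∑ ω : Fin q → Θ, Pw p q ω * (if θ' = θ then (1:ℝ) else 0)
        = (if θ' = θ then (1:ℝ) else 0) := by
      intro θ'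
      rw [← Finset.sum_mul, sum_Pw p hp1 q, one_mul]
    rw [Finset.sum_congr rfl fun θ' _ => by rw [e2 θ']]
    simp
  rw [Finset.sum_congr rfl fun i _ => per i]
  rw [Finset.sum_const, Finset.card_univ, Fintype.card_fin, nsmul_eq_mul]
  field_simp

lemma fiber_sum {q : ℕ} (f : (Fin q → Θ) → ℝ) (V : (Θ → ℝ) → ℝ) :
    ∑ pp ∈ (univ : Finset (Fin q → Θ)).image (emp q),
      (∑ ω ∈ univ.filter (fun ω => emp q ω = pp), f ω) * V pp
    = ∑ ω : Fin q → Θ, f ω * V (emp q ω) := by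
  rw [← Finset.sum_fiberwise_of_maps_to
    (fun ω _ => Finset.mem_image_of_mem (emp q) (Finset.mem_univ ω))
    (fun ω => f ω * V (emp q ω))]
  refine Finset.sum_congr rfl fun pp _ => ?_
  rw [Finset.sum_mul]
  refine Finset.sum_congr rfl fun ω hω => ?_
  rw [(Finset.mem_filter.mp hω).2]

lemma scheme_sum (T : Finset (Θ → ℝ)) (γ : (Θ → ℝ) → ℝ) {q : ℕ}
    (P : (Θ → ℝ) → (Fin q → Θ) → ℝ) (V : (Θ → ℝ) → ℝ) :
    ∑ pp ∈ (univ : Finset (Fin q → Θ)).image (emp q),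
      (∑ p ∈ T, γ p * ∑ ω ∈ univ.filter (fun ω => emp q ω = pp), P p ω) * V pp
    = ∑ p ∈ T, γ p * ∑ ω : Fin q → Θ, P p ω * V (emp q ω) := by
  calc ∑ pp ∈ (univ : Finset (Fin q → Θ)).image (emp q),
      (∑ p ∈ T, γ p * ∑ ω ∈ univ.filter (fun ω => emp q ω = pp), P p ω) * V pp
      = ∑ pp ∈ (univ : Finset (Fin q → Θ)).image (emp q),
        ∑ p ∈ T, (γ p * ∑ ω ∈ univ.filter (fun ω => emp q ω = pp), P p ω) * V pp := by
        exact Finset.sum_congr rfl fun pp _ => Finset.sum_mul _ _ _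
    _ = ∑ p ∈ T, ∑ pp ∈ (univ : Finset (Fin q → Θ)).image (emp q),
        (γ p * ∑ ω ∈ univ.filter (fun ω => emp q ω = pp), P p ω) * V pp := Finset.sum_comm
    _ = ∑ p ∈ T, γ p * ∑ pp ∈ (univ : Finset (Fin q → Θ)).image (emp q),
        (∑ ω ∈ univ.filter (fun ω => emp q ω = pp), P p ω) * V pp := by
        refine Finset.sum_congr rfl fun p _ => ?_
        rw [Finset.mul_sum]
        exact Finset.sum_congr rfl fun pp _ => by ring
    _ = ∑ p ∈ T, γ p * ∑ ω : Fin q → Θ, P p ω * V (emp q ω) := by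
        refine Finset.sum_congr rfl fun p _ => ?_
        rw [fiber_sum]

end NearOpt

open NearOpt

/-- Existence of a near-optimal `ε`-persuasive public signaling scheme supported on
`q`-uniform posteriors: if `g_θ` is `β`-stable compared with `h_θ` for every `θ` and
`q ≥ 32·log(4/(η·min{1,1/β}))/ε²`, there is a Bayes-plausible distribution over `q`-uniform
posteriors whose `ε`-persuasive `g`-value is at least `(1−η)` times the supremum of the
persuasive `h`-value over all (finitely supported) public signaling schemes. -/
theorem exists_near_optimal_public_scheme {Θ R : Type*} [Fintype Θ] [Fintype R] [DecidableEq R]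
    (μ : Θ → ℝ) (hμ0 : ∀ θ, 0 ≤ μ θ) (hμ1 : ∑ θ, μ θ = 1)
    (u : R → Θ → ℝ) (hu : ∀ r θ, u r θ ∈ Set.Icc (-1 : ℝ) 1)
    (g h : Θ → (R → Bool) → ℝ)
    (hg01 : ∀ θ c, g θ c ∈ Set.Icc (0 : ℝ) 1) (hh01 : ∀ θ c, h θ c ∈ Set.Icc (0 : ℝ) 1)
    (β : ℝ) (hβ : 0 < β)
    (hstab : ∀ θ (c : R → Bool) (α : ℝ), α ∈ Set.Ioc (0 : ℝ) 1 →
      ∀ y : (R → Bool) → ℝ, (∀ c', 0 ≤ y c') → (∑ c', y c' = 1) →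
        (∀ r : R, ∑ c' ∈ univ.filter (fun c' : R → Bool => c' r ≠ c r), y c' ≤ α) →
        h θ c * (1 - α * β) ≤ ∑ c', y c' * g θ c')
    (ε η : ℝ) (hε : 0 < ε) (hη : η ∈ Set.Ioc (0 : ℝ) 1)
    (q : ℕ) (hq : 0 < q)
    (hq2 : 32 * Real.log (4 / (η * min 1 (1 / β))) / ε ^ 2 ≤ q) :
    ∃ (S : Finset (Θ → ℝ)) (γε : (Θ → ℝ) → ℝ),
      (∀ p ∈ S, (∀ θ, 0 ≤ p θ) ∧ (∑ θ, p θ = 1) ∧ (∀ θ, ∃ n : ℕ, p θ = (n : ℝ) / q)) ∧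
      (∀ p ∈ S, 0 ≤ γε p) ∧ (∑ p ∈ S, γε p = 1) ∧
      (∀ θ, ∑ p ∈ S, γε p * p θ = μ θ) ∧
      (1 - η) * sSup { v : ℝ | ∃ (T : Finset (Θ → ℝ)) (γ : (Θ → ℝ) → ℝ),
          (∀ p ∈ T, (∀ θ, 0 ≤ p θ) ∧ (∑ θ, p θ = 1)) ∧
          (∀ p ∈ T, 0 ≤ γ p) ∧ (∑ p ∈ T, γ p = 1) ∧
          (∀ θ, ∑ p ∈ T, γ p * p θ = μ θ) ∧
          v = ∑ p ∈ T, γ p * sSup ((fun c => ∑ θ, p θ * h θ c) '' Fpers u p) } ≤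
        ∑ p ∈ S, γε p * sSup ((fun c => ∑ θ, p θ * g θ c) '' Feps u ε p) := by
  classical
  obtain ⟨hη0, hη1⟩ := hη
  have h12 : (0:ℝ) < 1 - η / 2 := by linarith
  -- nonemptiness of feasible sets
  have hFne : ∀ p : Θ → ℝ, (Fpers u p).Nonempty := by
    intro p
    refine ⟨fun r => if 0 < ∑ θ, p θ * u r θ then true else false, ?_, ?_⟩
    · intro r hr; simp [if_pos hr]
    · intro r hr
      have hnr : ¬ (0 < ∑ θ, p θ * u r θ) := by linarith
      simp [if_neg hnr]
  -- inner sup bounds for the h-value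
  have hinnerH_le : ∀ p : Θ → ℝ, (∀ θ, 0 ≤ p θ) → (∑ θ, p θ = 1) →
      sSup ((fun c => ∑ θ, p θ * h θ c) '' Fpers u p) ≤ 1 := by
    intro p hp0 hp1
    refine csSup_le ((hFne p).image _) ?_
    rintro x ⟨c, hc, rfl⟩
    calc ∑ θ, p θ * h θ c ≤ ∑ θ, p θ := by
          refine Finset.sum_le_sum fun θ _ => ?_
          nlinarith [hp0 θ, (hh01 θ c).1, (hh01 θ c).2]
      _ = 1 := hp1
  have hinnerH_nn : ∀ p : Θ → ℝ, (∀ θ, 0 ≤ p θ) →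
      0 ≤ sSup ((fun c => ∑ θ, p θ * h θ c) '' Fpers u p) := by
    intro p hp0
    obtain ⟨c, hc⟩ := hFne p
    have h1 : 0 ≤ ∑ θ, p θ * h θ c :=
      Finset.sum_nonneg fun θ _ => mul_nonneg (hp0 θ) (hh01 θ c).1
    refine le_trans h1 (le_csSup ?_ (Set.mem_image_of_mem _ hc))
    exact ((Set.toFinite (Fpers u p)).image _).bddAbove
  set VS := { v : ℝ | ∃ (T : Finset (Θ → ℝ)) (γ : (Θ → ℝ) → ℝ),
      (∀ p ∈ T, (∀ θ, 0 ≤ p θ) ∧ (∑ θ, p θ = 1)) ∧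
      (∀ p ∈ T, 0 ≤ γ p) ∧ (∑ p ∈ T, γ p = 1) ∧
      (∀ θ, ∑ p ∈ T, γ p * p θ = μ θ) ∧
      v = ∑ p ∈ T, γ p * sSup ((fun c => ∑ θ, p θ * h θ c) '' Fpers u p) } with hVS
  have hVSbdd : BddAbove VS := by
    refine ⟨1, ?_⟩
    rintro v ⟨T, γ, hTpost, hγ0, hγ1, hTB, rfl⟩
    calc ∑ p ∈ T, γ p * sSup ((fun c => ∑ θ, p θ * h θ c) '' Fpers u p)
        ≤ ∑ p ∈ T, γ p * 1 := by
          refine Finset.sum_le_sum fun p hp => ?_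
          exact mul_le_mul_of_nonneg_left
            (hinnerH_le p (hTpost p hp).1 (hTpost p hp).2) (hγ0 p hp)
      _ = 1 := by simpa using hγ1
  have hvone_mem : (∑ p ∈ ({μ} : Finset (Θ → ℝ)), (1:ℝ) *
      sSup ((fun c => ∑ θ, p θ * h θ c) '' Fpers u p)) ∈ VS := by
    refine ⟨{μ}, fun _ => (1:ℝ), ?_, ?_, ?_, ?_, rfl⟩
    · intro p hp
      rw [Finset.mem_singleton] at hp
      subst hp
      exact ⟨hμ0, hμ1⟩
    · intro p _; norm_num
    · simp
    · intro θ; simp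
  have hSS0 : 0 ≤ sSup VS := by
    refine le_trans ?_ (le_csSup hVSbdd hvone_mem)
    rw [Finset.sum_singleton, one_mul]
    exact hinnerH_nn μ hμ0
  -- choose a near-optimal scheme
  have hvchoice : ∃ v ∈ VS, (1 - η / 2) * sSup VS ≤ v := by
    by_cases hpos : 0 < sSup VS
    · have hlt : (1 - η / 2) * sSup VS < sSup VS := by nlinarith
      obtain ⟨v, hvmem, hvgt⟩ := exists_lt_of_lt_csSup ⟨_, hvone_mem⟩ hlt
      exact ⟨v, hvmem, hvgt.le⟩
    · have hz : sSup VS = 0 := le_antisymm (not_lt.mp hpos) hSS0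
      refine ⟨_, hvone_mem, ?_⟩
      rw [hz, mul_zero, Finset.sum_singleton, one_mul]
      exact hinnerH_nn μ hμ0
  obtain ⟨v, hvmem, hvge⟩ := hvchoice
  obtain ⟨T, γ, hTpost, hγ0, hγ1, hTB, hveq⟩ := hvmem
  -- the q-uniform scheme
  refine ⟨(univ : Finset (Fin q → Θ)).image (emp q),
    fun pp => ∑ p ∈ T, γ p * ∑ ω ∈ univ.filter (fun ω : Fin q → Θ => emp q ω = pp), Pw p q ω,
    ?_, ?_, ?_, ?_, ?_⟩
  · -- posteriors are q-uniform
    intro pp hpp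
    obtain ⟨ω, _, rfl⟩ := Finset.mem_image.mp hpp
    refine ⟨emp_nonneg q ω, emp_sum hq ω, fun θ => ?_⟩
    refine ⟨(univ.filter (fun i : Fin q => ω i = θ)).card, ?_⟩
    simp only [emp]
    rw [Finset.sum_boole]
  · -- nonnegativity of weights
    intro pp _
    refine Finset.sum_nonneg fun p hp => mul_nonneg (hγ0 p hp) ?_
    exact Finset.sum_nonneg fun ω _ => Pw_nonneg (hTpost p hp).1 ω
  · -- total mass one
    have hs := scheme_sum T γ (fun p => Pw p q) (fun _ => (1:ℝ))
    simp only [mul_one] at hs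
    rw [hs]
    calc ∑ p ∈ T, γ p * ∑ ω : Fin q → Θ, Pw p q ω = ∑ p ∈ T, γ p * 1 := by
          refine Finset.sum_congr rfl fun p hp => ?_
          rw [sum_Pw p (hTpost p hp).2 q]
      _ = 1 := by simpa using hγ1
  · -- Bayes plausibility
    intro θ
    have hs := scheme_sum T γ (fun p => Pw p q) (fun pp => pp θ)
    rw [hs]
    calc ∑ p ∈ T, γ p * ∑ ω : Fin q → Θ, Pw p q ω * emp q ω θ
        = ∑ p ∈ T, γ p * p θ := by
          refine Finset.sum_congr rfl fun p hp => ?_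
          rw [mean p (hTpost p hp).2 hq θ]
      _ = μ θ := hTB θ
  · -- value guarantee
    have hs := scheme_sum T γ (fun p => Pw p q)
      (fun pp => sSup ((fun c => ∑ θ, pp θ * g θ c) '' Feps u ε pp))
    rw [hs]
    have per_p : ∀ p ∈ T, (1 - η / 2) * sSup ((fun c => ∑ θ, p θ * h θ c) '' Fpers u p)
        ≤ ∑ ω : Fin q → Θ, Pw p q ω *
            sSup ((fun c => ∑ θ, emp q ω θ * g θ c) '' Feps u ε (emp q ω)) := by
      intro p hp
      obtain ⟨hp0', hp1'⟩ := hTpost p hp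
      have hmain : ∀ c ∈ Fpers u p, (1 - η / 2) * ∑ θ, p θ * h θ c
          ≤ ∑ ω : Fin q → Θ, Pw p q ω *
              sSup ((fun c' => ∑ θ, emp q ω θ * g θ c') '' Feps u ε (emp q ω)) :=
        fun c hc => main_per_posterior p hp0' hp1' u hu g h hg01 hh01 hβ hstab hε ⟨hη0, hη1⟩ hq hq2 c hc
      have hdiv : sSup ((fun c => ∑ θ, p θ * h θ c) '' Fpers u p)
          ≤ (∑ ω : Fin q → Θ, Pw p q ω *
              sSup ((fun c' => ∑ θ, emp q ω θ * g θ c') '' Feps u ε (emp q ω))) / (1 - η / 2) := by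
        refine csSup_le ((hFne p).image _) ?_
        rintro x ⟨c, hc, rfl⟩
        rw [le_div_iff₀ h12]
        linarith [hmain c hc]
      calc (1 - η / 2) * sSup ((fun c => ∑ θ, p θ * h θ c) '' Fpers u p)
          ≤ (1 - η / 2) * ((∑ ω : Fin q → Θ, Pw p q ω *
              sSup ((fun c' => ∑ θ, emp q ω θ * g θ c') '' Feps u ε (emp q ω))) / (1 - η / 2)) :=
            mul_le_mul_of_nonneg_left hdiv h12.le
        _ = ∑ ω : Fin q → Θ, Pw p q ω *
              sSup ((fun c' => ∑ θ, emp q ω θ * g θ c') '' Feps u ε (emp q ω)) := by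
            rw [mul_comm, div_mul_cancel₀ _ (ne_of_gt h12)]
    calc (1 - η) * sSup VS ≤ (1 - η / 2) * ((1 - η / 2) * sSup VS) := by nlinarith [mul_nonneg hSS0 (sq_nonneg η)]
      _ ≤ (1 - η / 2) * v := mul_le_mul_of_nonneg_left hvge h12.le
      _ = ∑ p ∈ T, γ p * ((1 - η / 2) * sSup ((fun c => ∑ θ, p θ * h θ c) '' Fpers u p)) := by
          rw [hveq, Finset.mul_sum]
          exact Finset.sum_congr rfl fun p _ => by ring
      _ ≤ ∑ p ∈ T, γ p * ∑ ω : Fin q → Θ, Pw p q ω *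
            sSup ((fun c => ∑ θ, emp q ω θ * g θ c) '' Feps u ε (emp q ω)) :=
          Finset.sum_le_sum fun p hp => mul_le_mul_of_nonneg_left (per_p p hp) (hγ0 p hp)
end

section
/- Existence of a near-optimal ε-persuasive public signaling scheme for district-based elections with doubly-relaxed majority: let Θ be a finite state set with prior μ ∈ Δ(Θ), and consider a district-based election over a finite voter set R partitioned into districts D, with net utilities u_r : Θ → [−1,1]. Let δ ∈ (0,1), ε > 0, η ∈ (0,1], and let q be a positive integer with q ≥ 32·log(4/(η·δ²))/ε². Then there exists a probability distribution γ_ε supported on the set 𝒬 of q-uniform posteriors with Σ_{p∈𝒬} (γ_ε)_p·p = μ such that Σ_{p∈𝒬} (γ_ε)_p · 𝒲_δδ(b^{p,ε}) ≥ (1−η) · sup_γ Σ_p γ_p · 𝒲(b^{p}), where the supremum is over all finitely supported probability distributions γ over Δ(Θ) with Σ_p γ_p·p = μ, b^{p,ε} ∈ {c0,c1}^R is the profile with b^{p,ε}_r = c0 iff Σ_θ p_θ·u_r(θ) ≥ −ε, and b^{p} is the profile with b^{p}_r = c0 iff Σ_θ p_θ·u_r(θ) ≥ 0. -/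
open Finset

/-- Number of voters of district `d` voting for candidate `c0` (encoded as `true`). -/
def districtVotes {R D : Type*} [Fintype R] [DecidableEq D] (dist : R → D)
    (c : R → Bool) (d : D) : ℕ :=
  (univ.filter (fun r => dist r = d ∧ c r = true)).card

/-- The within-district majority threshold `K_d = ⌈|R^d|/2⌉`. -/
noncomputable def Kd {R D : Type*} [Fintype R] [DecidableEq D] (dist : R → D) (d : D) : ℕ :=
  ⌈((univ.filter (fun r => dist r = d)).card : ℝ) / 2⌉₊

/-- The district-level majority threshold `K_D = ⌈|D|/2⌉`. -/
noncomputable def KD (D : Type*) [Fintype D] : ℕ :=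
  ⌈(Fintype.card D : ℝ) / 2⌉₊

/-- The district-based majority function `𝒲`: value `1` iff at least `K_D` districts `d`
have at least `K_d` voters voting `c0`. -/
noncomputable def Wdistrict {R D : Type*} [Fintype R] [Fintype D] [DecidableEq D]
    (dist : R → D) (c : R → Bool) : ℝ :=
  if KD D ≤ (univ.filter (fun d => Kd dist d ≤ districtVotes dist c d)).card then 1 else 0

/-- The doubly-relaxed district-based majority function `𝒲_δδ`: value `1` iff at least
`⌈(1-δ)·K_D⌉` districts `d` have at least `⌈(1-δ)·K_d⌉` voters voting `c0`. -/
noncomputable def Wdd {R D : Type*} [Fintype R] [Fintype D] [DecidableEq D]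
    (dist : R → D) (δ : ℝ) (c : R → Bool) : ℝ :=
  if ⌈(1 - δ) * (KD D : ℝ)⌉₊ ≤
      (univ.filter (fun d => ⌈(1 - δ) * (Kd dist d : ℝ)⌉₊ ≤ districtVotes dist c d)).card
    then 1 else 0

/-- The `ε`-persuasive best-response profile `b^{p,ε}`: voter `r` votes `c0` (`true`) iff
`∑ θ, p θ · u r θ ≥ −ε`. (`b^{p}` is recovered with `ε = 0`.) -/
noncomputable def bestResp {Θ R : Type*} [Fintype Θ] (u : R → Θ → ℝ) (ε : ℝ)
    (p : Θ → ℝ) : R → Bool :=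
  fun r => if -ε ≤ ∑ θ, p θ * u r θ then true else false

section AuxProb
variable {Θ : Type*} [Fintype Θ]

open scoped Classical in
noncomputable def cntD (q : ℕ) (ω : Fin q → Θ) (θ : Θ) : ℕ :=
  ∑ i, if ω i = θ then 1 else 0

noncomputable def empD (q : ℕ) (ω : Fin q → Θ) : Θ → ℝ :=
  fun θ => (cntD q ω θ : ℝ) / q

noncomputable def pwt (q : ℕ) (p : Θ → ℝ) (ω : Fin q → Θ) : ℝ :=
  ∏ i, p (ω i)

lemma pwt_nonneg {q : ℕ} {p : Θ → ℝ} (hp : ∀ θ, 0 ≤ p θ) (ω : Fin q → Θ) :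
    0 ≤ pwt q p ω := Finset.prod_nonneg fun _ _ => hp _

lemma sum_prod_eq {q : ℕ} (g : Fin q → Θ → ℝ) :
    ∑ ω : Fin q → Θ, ∏ i, g i (ω i) = ∏ i, ∑ θ, g i θ :=
  (Fintype.prod_sum g).symm

lemma sum_pwt {q : ℕ} {p : Θ → ℝ} (hp1 : ∑ θ, p θ = 1) :
    ∑ ω : Fin q → Θ, pwt q p ω = 1 := by
  simp [pwt, sum_prod_eq (fun _ θ => p θ), hp1]

lemma empD_nonneg {q : ℕ} (ω : Fin q → Θ) (θ : Θ) : 0 ≤ empD q ω θ := by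
  unfold empD; positivity

lemma emp_dot {q : ℕ} (hq : 0 < q) (ω : Fin q → Θ) (a : Θ → ℝ) :
    ∑ θ, empD q ω θ * a θ = (∑ i, a (ω i)) / q := by
  classical
  have h : ∀ θ, empD q ω θ * a θ
      = (∑ i : Fin q, if ω i = θ then a θ else 0) / q := by
    intro θ
    rw [empD, cntD, div_mul_eq_mul_div]
    congr 1
    push_cast
    rw [Finset.sum_mul]
    exact Finset.sum_congr rfl fun i _ => by by_cases h : ω i = θ <;> simp [h]
  rw [Finset.sum_congr rfl fun θ _ => h θ, ← Finset.sum_div]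
  congr 1
  rw [Finset.sum_comm]
  exact Finset.sum_congr rfl fun i _ => by simp

lemma empD_sum {q : ℕ} (hq : 0 < q) (ω : Fin q → Θ) : ∑ θ, empD q ω θ = 1 := by
  have h := emp_dot hq ω (fun _ => (1:ℝ))
  simp only [mul_one, Finset.sum_const, Finset.card_univ, Fintype.card_fin,
    nsmul_eq_mul] at h
  rw [h, div_self (by positivity : ((q:ℝ)) ≠ 0)]

lemma sum_pwt_empD {q : ℕ} (hq : 0 < q) {p : Θ → ℝ} (hp1 : ∑ θ, p θ = 1) (θ0 : Θ) :
    ∑ ω : Fin q → Θ, pwt q p ω * empD q ω θ0 = p θ0 := by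
  classical
  have key : ∀ i : Fin q,
      ∑ ω : Fin q → Θ, (pwt q p ω * if ω i = θ0 then (1:ℝ) else 0) = p θ0 := by
    intro i
    set g : Fin q → Θ → ℝ := fun j θ' => if j = i then (if θ' = θ0 then p θ' else 0) else p θ'
      with hg
    have h2 : ∀ ω : Fin q → Θ, (pwt q p ω * if ω i = θ0 then (1:ℝ) else 0)
        = ∏ j, g j (ω j) := by
      intro ω
      by_cases h : ω i = θ0
      · rw [if_pos h, mul_one, pwt]
        refine Finset.prod_congr rfl fun j _ => ?_
        by_cases hj : j = i
        · subst hj; simp [hg, h]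
        · simp [hg, hj]
      · rw [if_neg h, mul_zero]
        exact (Finset.prod_eq_zero (Finset.mem_univ i) (by simp [hg, h])).symm
    rw [Finset.sum_congr rfl fun ω _ => h2 ω, sum_prod_eq g]
    have h3 : ∀ j, (∑ θ', g j θ') = if j = i then p θ0 else 1 := by
      intro j
      by_cases hj : j = i
      · simp [hg, hj, Finset.sum_ite_eq' Finset.univ θ0 p]
      · simp [hg, hj, hp1]
    rw [Finset.prod_congr rfl fun j _ => h3 j, Finset.prod_ite_eq' Finset.univ i
      (fun _ => p θ0)]
    simp
  have h4 : ∀ ω : Fin q → Θ, pwt q p ω * empD q ω θ0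
      = (∑ i : Fin q, (pwt q p ω * if ω i = θ0 then (1:ℝ) else 0)) / q := by
    intro ω
    rw [empD, cntD, mul_div_assoc']
    congr 1
    push_cast
    rw [Finset.mul_sum]
  rw [Finset.sum_congr rfl fun ω _ => h4 ω, ← Finset.sum_div, Finset.sum_comm,
    Finset.sum_congr rfl fun i _ => key i]
  simp only [Finset.sum_const, Finset.card_univ, Fintype.card_fin, nsmul_eq_mul]
  field_simp

lemma sum_pwt_exp {q : ℕ} (p : Θ → ℝ) (a : Θ → ℝ) (s : ℝ) :
    ∑ ω : Fin q → Θ, pwt q p ω * Real.exp (s * ∑ i, a (ω i))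
      = (∑ θ, p θ * Real.exp (s * a θ)) ^ q := by
  have h : ∀ ω : Fin q → Θ, pwt q p ω * Real.exp (s * ∑ i, a (ω i))
      = ∏ i, (p (ω i) * Real.exp (s * a (ω i))) := by
    intro ω
    rw [Finset.mul_sum, Real.exp_sum, pwt, ← Finset.prod_mul_distrib]
  rw [Finset.sum_congr rfl fun ω _ => h ω, sum_prod_eq (fun _ θ => p θ * Real.exp (s * a θ)),
    Finset.prod_const, Finset.card_univ, Fintype.card_fin]

lemma exp_le_combo {x t : ℝ} (hx : x ∈ Set.Icc (-1:ℝ) 1) :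
    Real.exp (-t * x) ≤ ((1 - x) * Real.exp t + (1 + x) * Real.exp (-t)) / 2 := by
  obtain ⟨hx1, hx2⟩ := hx
  have ha : (0:ℝ) ≤ (1 - x) / 2 := by linarith
  have hb : (0:ℝ) ≤ (1 + x) / 2 := by linarith
  have hab : (1 - x) / 2 + (1 + x) / 2 = 1 := by ring
  have := convexOn_exp.2 (Set.mem_univ t) (Set.mem_univ (-t)) ha hb hab
  simp only [smul_eq_mul] at this
  have harg : (1 - x) / 2 * t + (1 + x) / 2 * -t = -t * x := by ring
  rw [harg] at this
  calc Real.exp (-t * x) ≤ (1 - x) / 2 * Real.exp t + (1 + x) / 2 * Real.exp (-t) := this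
    _ = ((1 - x) * Real.exp t + (1 + x) * Real.exp (-t)) / 2 := by ring

lemma cosh_bound {t : ℝ} (h0 : 0 ≤ t) (h1 : t ≤ 1) :
    (Real.exp t + Real.exp (-t)) / 2 ≤ Real.exp (t ^ 2 / 2) := by
  have habs : |t| ≤ 1 := by rw [abs_of_nonneg h0]; exact h1
  have habs' : |(-t)| ≤ 1 := by rwa [abs_neg]
  have e1 := Real.exp_bound habs (by norm_num : 0 < 4)
  have e2 := Real.exp_bound habs' (by norm_num : 0 < 4)
  have hs1 : ∑ m ∈ Finset.range 4, t ^ m / (m.factorial : ℝ)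
      = 1 + t + t ^ 2 / 2 + t ^ 3 / 6 := by
    simp [Finset.sum_range_succ]
    norm_num [Nat.factorial]
    try ring
  have hs2 : ∑ m ∈ Finset.range 4, (-t) ^ m / (m.factorial : ℝ)
      = 1 - t + t ^ 2 / 2 - t ^ 3 / 6 := by
    simp [Finset.sum_range_succ]
    norm_num [Nat.factorial]
    try ring
  rw [hs1] at e1
  rw [hs2] at e2
  have hb1 : Real.exp t ≤ 1 + t + t ^ 2 / 2 + t ^ 3 / 6 + |t| ^ 4 * (5 / ((4:ℕ).factorial * 4)) := by
    have := abs_le.1 e1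
    linarith [this.2]
  have hb2 : Real.exp (-t) ≤ 1 - t + t ^ 2 / 2 - t ^ 3 / 6 + |(-t)| ^ 4 * (5 / ((4:ℕ).factorial * 4)) := by
    have := abs_le.1 e2
    linarith [this.2]
  have hfact : ((4:ℕ).factorial : ℝ) = 24 := by norm_num [Nat.factorial]
  rw [hfact] at hb1 hb2
  rw [abs_of_nonneg h0] at hb1
  rw [abs_neg, abs_of_nonneg h0] at hb2
  have hq : (1 + t ^ 2 / 4) ≤ Real.exp (t ^ 2 / 4) := by
    have := Real.add_one_le_exp (t ^ 2 / 4)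
    linarith
  have hsq : (1 + t ^ 2 / 4) ^ 2 ≤ Real.exp (t ^ 2 / 4) ^ 2 := by
    have h4 : (0:ℝ) ≤ 1 + t ^ 2 / 4 := by positivity
    exact pow_le_pow_left₀ h4 hq 2
  have hexp2 : Real.exp (t ^ 2 / 4) ^ 2 = Real.exp (t ^ 2 / 2) := by
    rw [← Real.exp_nat_mul]
    norm_num
    ring_nf
  rw [hexp2] at hsq
  have ht2 : t ^ 2 ≤ 1 := by nlinarith
  have ht4 : t ^ 4 ≤ t ^ 2 := by nlinarith [sq_nonneg t]
  nlinarith [hsq, hb1, hb2]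

lemma chernoff {q : ℕ} (hq : 0 < q) {p : Θ → ℝ} (hp0 : ∀ θ, 0 ≤ p θ)
    (hp1 : ∑ θ, p θ = 1) {a : Θ → ℝ} (ha : ∀ θ, a θ ∈ Set.Icc (-1:ℝ) 1)
    (hm : 0 ≤ ∑ θ, p θ * a θ) {ε : ℝ} (hε : 0 < ε) :
    ∑ ω ∈ Finset.univ.filter (fun ω : Fin q → Θ => ∑ θ, empD q ω θ * a θ < -ε), pwt q p ω
      ≤ Real.exp (-(q * ε ^ 2) / 2) := by
  classical
  have hq0 : (0:ℝ) < q := by exact_mod_cast hq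
  by_cases hε1 : 1 < ε
  · -- the event is empty
    have hempty : Finset.univ.filter (fun ω : Fin q → Θ => ∑ θ, empD q ω θ * a θ < -ε) = ∅ := by
      refine Finset.filter_false_of_mem fun ω _ => ?_
      rw [emp_dot hq ω a, not_lt]
      have h1 : (-1:ℝ) * q ≤ ∑ i, a (ω i) := by
        calc (-1:ℝ) * q = ∑ _i : Fin q, (-1:ℝ) := by
              simp [Finset.sum_const, Finset.card_univ, mul_comm]
          _ ≤ ∑ i, a (ω i) := Finset.sum_le_sum fun i _ => (ha (ω i)).1
      rw [le_div_iff₀ hq0]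
      nlinarith
    rw [hempty]
    simp [Real.exp_nonneg]
  · push_neg at hε1
    set c : ℝ := ∑ θ, p θ * Real.exp (-ε * a θ) with hc
    have hstep1 : ∑ ω ∈ Finset.univ.filter
          (fun ω : Fin q → Θ => ∑ θ, empD q ω θ * a θ < -ε), pwt q p ω
        ≤ Real.exp (-(q * ε ^ 2)) * c ^ q := by
      have hterm : ∀ ω ∈ Finset.univ.filter
          (fun ω : Fin q → Θ => ∑ θ, empD q ω θ * a θ < -ε),
          pwt q p ω ≤ Real.exp (-(q * ε ^ 2)) * (pwt q p ω * Real.exp (-ε * ∑ i, a (ω i))) := by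
        intro ω hω
        rw [Finset.mem_filter] at hω
        have hlt := hω.2
        rw [emp_dot hq ω a, div_lt_iff₀ hq0] at hlt
        have h2 : 1 ≤ Real.exp (-(q * ε ^ 2)) * Real.exp (-ε * ∑ i, a (ω i)) := by
          rw [← Real.exp_add]
          exact Real.one_le_exp (by nlinarith [mul_lt_mul_of_pos_left hlt hε])
        calc pwt q p ω = pwt q p ω * 1 := by ring
          _ ≤ pwt q p ω * (Real.exp (-(q * ε ^ 2)) * Real.exp (-ε * ∑ i, a (ω i))) :=
              mul_le_mul_of_nonneg_left h2 (pwt_nonneg hp0 ω)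
          _ = Real.exp (-(q * ε ^ 2)) * (pwt q p ω * Real.exp (-ε * ∑ i, a (ω i))) := by ring
      calc ∑ ω ∈ Finset.univ.filter
            (fun ω : Fin q → Θ => ∑ θ, empD q ω θ * a θ < -ε), pwt q p ω
          ≤ ∑ ω ∈ Finset.univ.filter
            (fun ω : Fin q → Θ => ∑ θ, empD q ω θ * a θ < -ε),
              Real.exp (-(q * ε ^ 2)) * (pwt q p ω * Real.exp (-ε * ∑ i, a (ω i))) :=
            Finset.sum_le_sum hterm
        _ ≤ ∑ ω : Fin q → Θ,
              Real.exp (-(q * ε ^ 2)) * (pwt q p ω * Real.exp (-ε * ∑ i, a (ω i))) := by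
            refine Finset.sum_le_sum_of_subset_of_nonneg (Finset.filter_subset _ _)
              fun ω _ _ => ?_
            have := pwt_nonneg hp0 ω
            positivity
        _ = Real.exp (-(q * ε ^ 2)) * c ^ q := by
            rw [← Finset.mul_sum, sum_pwt_exp p a (-ε)]
    have hc_le : c ≤ Real.exp (ε ^ 2 / 2) := by
      have h1 : c ≤ ∑ θ, p θ * (((1 - a θ) * Real.exp ε + (1 + a θ) * Real.exp (-ε)) / 2) := by
        refine Finset.sum_le_sum fun θ _ => ?_
        exact mul_le_mul_of_nonneg_left (exp_le_combo (ha θ)) (hp0 θ)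
      have h2 : ∑ θ, p θ * (((1 - a θ) * Real.exp ε + (1 + a θ) * Real.exp (-ε)) / 2)
          = (Real.exp ε + Real.exp (-ε)) / 2
            - (∑ θ, p θ * a θ) * ((Real.exp ε - Real.exp (-ε)) / 2) := by
        have hterm2 : ∀ θ, p θ * (((1 - a θ) * Real.exp ε + (1 + a θ) * Real.exp (-ε)) / 2)
            = p θ * ((Real.exp ε + Real.exp (-ε)) / 2)
              - p θ * a θ * ((Real.exp ε - Real.exp (-ε)) / 2) := fun θ => by ring
        rw [Finset.sum_congr rfl fun θ _ => hterm2 θ, Finset.sum_sub_distrib,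
          ← Finset.sum_mul, ← Finset.sum_mul, hp1, one_mul]
      have h3 : (∑ θ, p θ * a θ) * ((Real.exp ε - Real.exp (-ε)) / 2) ≥ 0 := by
        apply mul_nonneg hm
        have : Real.exp (-ε) ≤ Real.exp ε := Real.exp_le_exp.2 (by linarith)
        linarith
      have h4 := cosh_bound (le_of_lt hε) hε1
      linarith
    have hcpos : 0 ≤ c := Finset.sum_nonneg fun θ _ =>
      mul_nonneg (hp0 θ) (Real.exp_pos _).le
    have hfin : Real.exp (-(q * ε ^ 2)) * c ^ q
        ≤ Real.exp (-(q * ε ^ 2)) * Real.exp (ε ^ 2 / 2) ^ q := by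
      exact mul_le_mul_of_nonneg_left (pow_le_pow_left₀ hcpos hc_le q) (Real.exp_pos _).le
    have heq : Real.exp (-(q * ε ^ 2)) * Real.exp (ε ^ 2 / 2) ^ q
        = Real.exp (-(q * ε ^ 2) / 2) := by
      rw [← Real.exp_nat_mul, ← Real.exp_add]
      congr 1
      ring
    linarith [hstep1]

end AuxProb

lemma markov_count {X Ω : Type*} [Fintype Ω] (v : Ω → ℝ) (hv : ∀ ω, 0 ≤ v ω)
    (s : Finset X) (bad : X → Ω → Prop) [∀ x ω, Decidable (bad x ω)]
    (k b : ℝ) (hk : 0 < k) (hb0 : 0 ≤ b)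
    (hb : ∀ x ∈ s, ∑ ω ∈ Finset.univ.filter (fun ω => bad x ω), v ω ≤ b) :
    ∑ ω ∈ Finset.univ.filter
        (fun ω => k ≤ ((s.filter (fun x => bad x ω)).card : ℝ)), v ω
      ≤ s.card * b / k := by
  have h1 : ∀ ω ∈ Finset.univ.filter
      (fun ω => k ≤ ((s.filter (fun x => bad x ω)).card : ℝ)),
      v ω ≤ v ω * ((s.filter (fun x => bad x ω)).card : ℝ) / k := by
    intro ω hω
    rw [Finset.mem_filter] at hω
    rw [le_div_iff₀ hk]
    exact mul_le_mul_of_nonneg_left hω.2 (hv ω)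
  have h2 : ∑ ω ∈ Finset.univ.filter
      (fun ω => k ≤ ((s.filter (fun x => bad x ω)).card : ℝ)), v ω
      ≤ ∑ ω : Ω, v ω * ((s.filter (fun x => bad x ω)).card : ℝ) / k := by
    refine le_trans (Finset.sum_le_sum h1) ?_
    refine Finset.sum_le_sum_of_subset_of_nonneg (Finset.filter_subset _ _)
      fun ω _ _ => ?_
    have := hv ω
    positivity
  have h3 : ∑ ω : Ω, v ω * ((s.filter (fun x => bad x ω)).card : ℝ)
      = ∑ x ∈ s, ∑ ω ∈ Finset.univ.filter (fun ω => bad x ω), v ω := by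
    have hc : ∀ ω : Ω, v ω * ((s.filter (fun x => bad x ω)).card : ℝ)
        = ∑ x ∈ s, if bad x ω then v ω else 0 := by
      intro ω
      rw [← Finset.sum_boole, Finset.mul_sum]
      exact Finset.sum_congr rfl fun x _ => by by_cases h : bad x ω <;> simp [h]
    rw [Finset.sum_congr rfl fun ω _ => hc ω, Finset.sum_comm]
    exact Finset.sum_congr rfl fun x _ => (Finset.sum_filter _ _).symm
  have h4 : ∑ x ∈ s, ∑ ω ∈ Finset.univ.filter (fun ω => bad x ω), v ω ≤ s.card * b := by
    refine le_trans (Finset.sum_le_sum hb) ?_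
    rw [Finset.sum_const, nsmul_eq_mul]
  refine le_trans h2 ?_
  rw [← Finset.sum_div, h3]
  gcongr


lemma bestResp_false_iff {Θ R : Type*} [Fintype Θ] (u : R → Θ → ℝ) (ε : ℝ)
    (p : Θ → ℝ) (r : R) :
    bestResp u ε p r = false ↔ ∑ θ, p θ * u r θ < -ε := by
  rw [bestResp]
  by_cases h : -ε ≤ ∑ θ, p θ * u r θ
  · simp only [if_pos h]
    simp only [Bool.true_eq_false, false_iff, not_lt]
    exact h
  · simp only [if_neg h]
    simp only [true_iff]
    exact lt_of_not_ge h

lemma bestResp_true_iff {Θ R : Type*} [Fintype Θ] (u : R → Θ → ℝ) (ε : ℝ)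
    (p : Θ → ℝ) (r : R) :
    bestResp u ε p r = true ↔ -ε ≤ ∑ θ, p θ * u r θ := by
  rw [bestResp]
  by_cases h : -ε ≤ ∑ θ, p θ * u r θ <;> simp [h]

lemma ceil_arith {K F NF V : ℝ} {δ : ℝ} (hδ0 : 0 < δ)
    (hKF : K ≤ F + NF) (hNFV : NF ≤ V) (hV : V < (1 - δ) * K) :
    δ * K ≤ F := by nlinarith

lemma key_step {Θ R D : Type*} [Fintype Θ] [Fintype R] [DecidableEq R] [Fintype D]
    [DecidableEq D] (dist : R → D) (u : R → Θ → ℝ)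
    (hu : ∀ r θ, u r θ ∈ Set.Icc (-1:ℝ) 1)
    {δ ε η : ℝ} (hδ0 : 0 < δ) (hδ1 : δ < 1) (hε : 0 < ε) (hη0 : 0 < η) (hη1 : η ≤ 1)
    {q : ℕ} (hq : 0 < q)
    (hβ : Real.exp (-((q:ℝ) * ε ^ 2) / 2) ≤ η * δ ^ 2 / 8)
    {p : Θ → ℝ} (hp0 : ∀ θ, 0 ≤ p θ) (hp1 : ∑ θ, p θ = 1) :
    (1 - η / 2) * Wdistrict dist (bestResp u 0 p)
      ≤ ∑ ω : Fin q → Θ, pwt q p ω * Wdd dist δ (bestResp u ε (empD q ω)) := by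
  classical
  have hWddnn : ∀ ω : Fin q → Θ, 0 ≤ Wdd dist δ (bestResp u ε (empD q ω)) := by
    intro ω; rw [Wdd]; split <;> norm_num
  by_cases hW : KD D ≤ (univ.filter
      (fun d => Kd dist d ≤ districtVotes dist (bestResp u 0 p) d)).card
  swap
  · rw [Wdistrict, if_neg hW, mul_zero]
    exact Finset.sum_nonneg fun ω _ => mul_nonneg (pwt_nonneg hp0 ω) (hWddnn ω)
  rw [Wdistrict, if_pos hW, mul_one]
  rcases Nat.eq_zero_or_pos (KD D) with hKD0 | hKDpos
  · have hone : ∀ ω : Fin q → Θ, Wdd dist δ (bestResp u ε (empD q ω)) = 1 := by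
      intro ω
      rw [Wdd, if_pos]
      rw [hKD0]
      simp
    rw [Finset.sum_congr rfl fun ω _ => by rw [hone ω, mul_one], sum_pwt hp1]
    linarith
  set β := Real.exp (-((q:ℝ) * ε ^ 2) / 2) with hβdef
  have hβ0 : 0 < β := Real.exp_pos _
  -- voter-level bound
  have hvoter : ∀ r : R, bestResp u 0 p r = true →
      ∑ ω ∈ Finset.univ.filter
        (fun ω : Fin q → Θ => bestResp u ε (empD q ω) r = false), pwt q p ω ≤ β := by
    intro r hr
    have hm : 0 ≤ ∑ θ, p θ * u r θ := by
      have := (bestResp_true_iff u 0 p r).1 hr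
      linarith
    have hset : Finset.univ.filter
          (fun ω : Fin q → Θ => bestResp u ε (empD q ω) r = false)
        = Finset.univ.filter (fun ω : Fin q → Θ => ∑ θ, empD q ω θ * u r θ < -ε) := by
      exact Finset.filter_congr fun ω _ => by
        rw [bestResp_false_iff]
    rw [hset]
    exact chernoff hq hp0 hp1 (fun θ => hu r θ) hm hε
  -- district-level bound
  set G := univ.filter
    (fun d => Kd dist d ≤ districtVotes dist (bestResp u 0 p) d) with hGdef
  have hdistrict : ∀ d ∈ G,
      ∑ ω ∈ Finset.univ.filter (fun ω : Fin q → Θ =>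
          ¬ (⌈(1 - δ) * (Kd dist d : ℝ)⌉₊
              ≤ districtVotes dist (bestResp u ε (empD q ω)) d)), pwt q p ω
        ≤ 2 * β / δ := by
    intro d hd
    rcases Nat.eq_zero_or_pos (Kd dist d) with hK0 | hKpos
    · have hempty : Finset.univ.filter (fun ω : Fin q → Θ =>
          ¬ (⌈(1 - δ) * (Kd dist d : ℝ)⌉₊
              ≤ districtVotes dist (bestResp u ε (empD q ω)) d)) = ∅ := by
        refine Finset.filter_false_of_mem fun ω _ => ?_
        rw [hK0]
        simp
      rw [hempty, Finset.sum_empty]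
      exact (div_pos (mul_pos two_pos hβ0) hδ0).le
    · set Y := univ.filter (fun r => dist r = d ∧ bestResp u 0 p r = true) with hYdef
      have hYcard : Y.card = districtVotes dist (bestResp u 0 p) d := rfl
      have hKle : Kd dist d ≤ Y.card := by
        rw [hYcard]
        exact (Finset.mem_filter.1 hd).2
      have hY2 : (Y.card : ℝ) ≤ 2 * (Kd dist d : ℝ) := by
        have h1 : Y.card ≤ (univ.filter (fun r => dist r = d)).card :=
          Finset.card_le_card (fun r hr => by
            rw [Finset.mem_filter] at hr ⊢
            exact ⟨hr.1, hr.2.1⟩)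
        have h2 : ((univ.filter (fun r => dist r = d)).card : ℝ) / 2 ≤ (Kd dist d : ℝ) :=
          Nat.le_ceil _
        have h3 : (Y.card : ℝ) ≤ ((univ.filter (fun r => dist r = d)).card : ℝ) := by
          exact_mod_cast h1
        linarith
    -- markov
      have hmk := markov_count (pwt q p) (pwt_nonneg hp0) Y
        (fun r ω => bestResp u ε (empD q ω) r = false) (δ * (Kd dist d : ℝ)) β
        (mul_pos hδ0 (by exact_mod_cast hKpos)) hβ0.le
        (fun r hr => hvoter r (Finset.mem_filter.1 hr).2.2)
      have hsub : Finset.univ.filter (fun ω : Fin q → Θ =>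
          ¬ (⌈(1 - δ) * (Kd dist d : ℝ)⌉₊
              ≤ districtVotes dist (bestResp u ε (empD q ω)) d))
          ⊆ Finset.univ.filter (fun ω : Fin q → Θ => δ * (Kd dist d : ℝ)
              ≤ ((Y.filter (fun r => bestResp u ε (empD q ω) r = false)).card : ℝ)) := by
        intro ω hω
        rw [Finset.mem_filter] at hω ⊢
        refine ⟨hω.1, ?_⟩
        have hbad := hω.2
        have hsplit := Finset.card_filter_add_card_filter_not
          (s := Y) (p := fun r => bestResp u ε (empD q ω) r = false)
        have hsub2 : Y.filter (fun r => ¬ (bestResp u ε (empD q ω) r = false))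
            ⊆ univ.filter (fun r => dist r = d ∧ bestResp u ε (empD q ω) r = true) := by
          intro r hr
          rw [Finset.mem_filter] at hr
          rw [Finset.mem_filter]
          have h1 := (Finset.mem_filter.1 hr.1).2.1
          exact ⟨Finset.mem_univ r, h1, by simpa using hr.2⟩
        have hNF : (Y.filter (fun r => ¬ (bestResp u ε (empD q ω) r = false))).card
            ≤ districtVotes dist (bestResp u ε (empD q ω)) d :=
          Finset.card_le_card hsub2
        have hceil : ((districtVotes dist (bestResp u ε (empD q ω)) d : ℕ) : ℝ)
            < (1 - δ) * (Kd dist d : ℝ) := by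
          have h1 : districtVotes dist (bestResp u ε (empD q ω)) d + 1
              ≤ ⌈(1 - δ) * (Kd dist d : ℝ)⌉₊ := Nat.succ_le_of_lt (lt_of_not_ge hbad)
          have h2 : (⌈(1 - δ) * (Kd dist d : ℝ)⌉₊ : ℝ) < (1 - δ) * (Kd dist d : ℝ) + 1 :=
            Nat.ceil_lt_add_one (mul_nonneg (by linarith) (Nat.cast_nonneg _))
          have h3 : ((districtVotes dist (bestResp u ε (empD q ω)) d : ℕ) : ℝ) + 1
              ≤ (⌈(1 - δ) * (Kd dist d : ℝ)⌉₊ : ℝ) := by exact_mod_cast h1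
          linarith
        refine ceil_arith (NF := ((Y.filter (fun r =>
            ¬ (bestResp u ε (empD q ω) r = false))).card : ℝ)) hδ0 ?_ ?_ hceil
        · have : Kd dist d ≤ (Y.filter (fun r => bestResp u ε (empD q ω) r = false)).card
              + (Y.filter (fun r => ¬ (bestResp u ε (empD q ω) r = false))).card := by
            rw [hsplit]; exact hKle
          exact_mod_cast this
        · exact_mod_cast hNF
      have hsum := Finset.sum_le_sum_of_subset_of_nonneg hsub
        (fun ω _ _ => pwt_nonneg hp0 ω)
      refine le_trans hsum (le_trans hmk ?_)
      have hKpos' : (0:ℝ) < (Kd dist d : ℝ) := by exact_mod_cast hKpos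
      rw [div_le_div_iff₀ (mul_pos hδ0 hKpos') hδ0]
      nlinarith [mul_le_mul_of_nonneg_right hY2 (mul_nonneg hβ0.le hδ0.le)]
  -- top level
  have htop := markov_count (pwt q p) (pwt_nonneg hp0) G
    (fun d ω => ¬ (⌈(1 - δ) * (Kd dist d : ℝ)⌉₊
        ≤ districtVotes dist (bestResp u ε (empD q ω)) d))
    (δ * (KD D : ℝ)) (2 * β / δ)
    (by
      have : (0:ℝ) < (KD D : ℝ) := by exact_mod_cast hKDpos
      positivity)
    (div_pos (mul_pos two_pos hβ0) hδ0).le hdistrict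
  have hGcard : (G.card : ℝ) ≤ 2 * (KD D : ℝ) := by
    have h1 : G.card ≤ Fintype.card D := by
      rw [← Finset.card_univ]
      exact Finset.card_le_card (Finset.filter_subset _ _)
    have h2 : ((Fintype.card D : ℕ) : ℝ) / 2 ≤ (KD D : ℝ) := Nat.le_ceil _
    have h3 : (G.card : ℝ) ≤ ((Fintype.card D : ℕ) : ℝ) := by exact_mod_cast h1
    linarith
  have hsubT : Finset.univ.filter (fun ω : Fin q → Θ =>
        ¬ (⌈(1 - δ) * (KD D : ℝ)⌉₊ ≤ (univ.filter (fun d =>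
            ⌈(1 - δ) * (Kd dist d : ℝ)⌉₊
              ≤ districtVotes dist (bestResp u ε (empD q ω)) d)).card))
      ⊆ Finset.univ.filter (fun ω : Fin q → Θ => δ * (KD D : ℝ)
          ≤ ((G.filter (fun d => ¬ (⌈(1 - δ) * (Kd dist d : ℝ)⌉₊
              ≤ districtVotes dist (bestResp u ε (empD q ω)) d))).card : ℝ)) := by
    intro ω hω
    rw [Finset.mem_filter] at hω ⊢
    refine ⟨hω.1, ?_⟩
    have hbad := hω.2
    have hsplit := Finset.card_filter_add_card_filter_not
      (s := G) (p := fun d => ¬ (⌈(1 - δ) * (Kd dist d : ℝ)⌉₊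
          ≤ districtVotes dist (bestResp u ε (empD q ω)) d))
    have hsub2 : G.filter (fun d => ¬ ¬ (⌈(1 - δ) * (Kd dist d : ℝ)⌉₊
          ≤ districtVotes dist (bestResp u ε (empD q ω)) d))
        ⊆ univ.filter (fun d => ⌈(1 - δ) * (Kd dist d : ℝ)⌉₊
            ≤ districtVotes dist (bestResp u ε (empD q ω)) d) := by
      intro d hd
      rw [Finset.mem_filter] at hd
      rw [Finset.mem_filter]
      exact ⟨Finset.mem_univ d, not_not.1 hd.2⟩
    have hNF := Finset.card_le_card hsub2
    have hV : (((univ.filter (fun d => ⌈(1 - δ) * (Kd dist d : ℝ)⌉₊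
        ≤ districtVotes dist (bestResp u ε (empD q ω)) d)).card : ℕ) : ℝ)
        < (1 - δ) * (KD D : ℝ) := by
      have h1 : (univ.filter (fun d => ⌈(1 - δ) * (Kd dist d : ℝ)⌉₊
          ≤ districtVotes dist (bestResp u ε (empD q ω)) d)).card + 1
          ≤ ⌈(1 - δ) * (KD D : ℝ)⌉₊ := Nat.succ_le_of_lt (lt_of_not_ge hbad)
      have h2 : (⌈(1 - δ) * (KD D : ℝ)⌉₊ : ℝ) < (1 - δ) * (KD D : ℝ) + 1 :=
        Nat.ceil_lt_add_one (mul_nonneg (by linarith) (Nat.cast_nonneg _))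
      have h3 : (((univ.filter (fun d => ⌈(1 - δ) * (Kd dist d : ℝ)⌉₊
          ≤ districtVotes dist (bestResp u ε (empD q ω)) d)).card : ℕ) : ℝ) + 1
          ≤ (⌈(1 - δ) * (KD D : ℝ)⌉₊ : ℝ) := by exact_mod_cast h1
      linarith
    refine ceil_arith (NF := ((G.filter (fun d => ¬ ¬ (⌈(1 - δ) * (Kd dist d : ℝ)⌉₊
          ≤ districtVotes dist (bestResp u ε (empD q ω)) d))).card : ℝ)) hδ0 ?_ ?_ hV
    · have : KD D ≤ (G.filter (fun d => ¬ (⌈(1 - δ) * (Kd dist d : ℝ)⌉₊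
          ≤ districtVotes dist (bestResp u ε (empD q ω)) d))).card
          + (G.filter (fun d => ¬ ¬ (⌈(1 - δ) * (Kd dist d : ℝ)⌉₊
              ≤ districtVotes dist (bestResp u ε (empD q ω)) d))).card := by
        rw [hsplit]; exact hW
      exact_mod_cast this
    · exact_mod_cast hNF
  have hbadP : ∑ ω ∈ Finset.univ.filter (fun ω : Fin q → Θ =>
        ¬ (⌈(1 - δ) * (KD D : ℝ)⌉₊ ≤ (univ.filter (fun d =>
            ⌈(1 - δ) * (Kd dist d : ℝ)⌉₊
              ≤ districtVotes dist (bestResp u ε (empD q ω)) d)).card)), pwt q p ω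
      ≤ η / 2 := by
    refine le_trans (Finset.sum_le_sum_of_subset_of_nonneg hsubT
      (fun ω _ _ => pwt_nonneg hp0 ω)) (le_trans htop ?_)
    have hKpos' : (0:ℝ) < (KD D : ℝ) := by exact_mod_cast hKDpos
    rw [div_le_iff₀ (by positivity)]
    have h8 : β * 8 ≤ η * δ ^ 2 := by linarith
    have hG0 : (0:ℝ) ≤ (G.card : ℝ) := by positivity
    have hx : (G.card : ℝ) * (2 * β / δ) ≤ 2 * (KD D : ℝ) * (2 * β / δ) := by
      apply mul_le_mul_of_nonneg_right hGcard
      positivity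
    refine le_trans hx ?_
    rw [show 2 * (KD D : ℝ) * (2 * β / δ) = 4 * (KD D : ℝ) * β / δ from by ring,
      div_le_iff₀ hδ0]
    nlinarith [mul_le_mul_of_nonneg_left h8 hKpos'.le]
  -- conclude
  have hsplitΩ := Finset.sum_filter_add_sum_filter_not Finset.univ
    (fun ω : Fin q → Θ => ⌈(1 - δ) * (KD D : ℝ)⌉₊ ≤ (univ.filter (fun d =>
        ⌈(1 - δ) * (Kd dist d : ℝ)⌉₊
          ≤ districtVotes dist (bestResp u ε (empD q ω)) d)).card) (pwt q p)
  have hRHS : ∑ ω : Fin q → Θ, pwt q p ω * Wdd dist δ (bestResp u ε (empD q ω))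
      = ∑ ω ∈ Finset.univ.filter (fun ω : Fin q → Θ =>
          ⌈(1 - δ) * (KD D : ℝ)⌉₊ ≤ (univ.filter (fun d =>
            ⌈(1 - δ) * (Kd dist d : ℝ)⌉₊
              ≤ districtVotes dist (bestResp u ε (empD q ω)) d)).card), pwt q p ω := by
    rw [Finset.sum_filter]
    refine Finset.sum_congr rfl fun ω _ => ?_
    rw [Wdd]
    split <;> simp
  rw [hRHS]
  have h1 : ∑ ω : Fin q → Θ, pwt q p ω = 1 := sum_pwt hp1
  linarith [hbadP, hsplitΩ, h1]


/-- Existence of a near-optimal `ε`-persuasive public signaling scheme for district-based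
elections with doubly-relaxed majority: if `q ≥ 32·log(4/(η·δ²))/ε²`, there is a
Bayes-plausible distribution over `q`-uniform posteriors whose expected `ε`-persuasive
`𝒲_δδ`-value is at least `(1−η)` times the supremum of the persuasive `𝒲`-value over all
(finitely supported) public signaling schemes. -/
theorem exists_near_optimal_public_scheme_district {Θ R D : Type*} [Fintype Θ]
    [Fintype R] [DecidableEq R] [Fintype D] [DecidableEq D] (dist : R → D)
    (μ : Θ → ℝ) (hμ0 : ∀ θ, 0 ≤ μ θ) (hμ1 : ∑ θ, μ θ = 1)
    (u : R → Θ → ℝ) (hu : ∀ r θ, u r θ ∈ Set.Icc (-1 : ℝ) 1)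
    (δ ε η : ℝ) (hδ : δ ∈ Set.Ioo (0 : ℝ) 1) (hε : 0 < ε) (hη : η ∈ Set.Ioc (0 : ℝ) 1)
    (q : ℕ) (hq : 0 < q)
    (hq2 : 32 * Real.log (4 / (η * δ ^ 2)) / ε ^ 2 ≤ q) :
    ∃ (S : Finset (Θ → ℝ)) (γε : (Θ → ℝ) → ℝ),
      (∀ p ∈ S, (∀ θ, 0 ≤ p θ) ∧ (∑ θ, p θ = 1) ∧ (∀ θ, ∃ n : ℕ, p θ = (n : ℝ) / q)) ∧
      (∀ p ∈ S, 0 ≤ γε p) ∧ (∑ p ∈ S, γε p = 1) ∧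
      (∀ θ, ∑ p ∈ S, γε p * p θ = μ θ) ∧
      (1 - η) * sSup { v : ℝ | ∃ (T : Finset (Θ → ℝ)) (γ : (Θ → ℝ) → ℝ),
          (∀ p ∈ T, (∀ θ, 0 ≤ p θ) ∧ (∑ θ, p θ = 1)) ∧
          (∀ p ∈ T, 0 ≤ γ p) ∧ (∑ p ∈ T, γ p = 1) ∧
          (∀ θ, ∑ p ∈ T, γ p * p θ = μ θ) ∧
          v = ∑ p ∈ T, γ p * Wdistrict dist (bestResp u 0 p) } ≤
        ∑ p ∈ S, γε p * Wdd dist δ (bestResp u ε p) := by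
  classical
  obtain ⟨hδ0, hδ1⟩ := hδ
  obtain ⟨hη0, hη1⟩ := hη
  have hq0 : (0:ℝ) < q := by exact_mod_cast hq
  set β := Real.exp (-((q:ℝ) * ε ^ 2) / 2) with hβdef
  -- the concentration budget
  have hβ : β ≤ η * δ ^ 2 / 8 := by
    have hd2 : δ ^ 2 ≤ 1 := by nlinarith
    have hx0 : (0:ℝ) < η * δ ^ 2 / 4 :=
      div_pos (mul_pos hη0 (pow_pos hδ0 2)) (by norm_num)
    have hx1 : η * δ ^ 2 / 4 ≤ 1 / 4 := by nlinarith
    have hinv : (4:ℝ) / (η * δ ^ 2) = (η * δ ^ 2 / 4)⁻¹ := by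
      field_simp
    have hlogeq : Real.log (4 / (η * δ ^ 2)) = - Real.log (η * δ ^ 2 / 4) := by
      rw [hinv, Real.log_inv]
    have hL0 : 0 ≤ Real.log (4 / (η * δ ^ 2)) := by
      apply Real.log_nonneg
      rw [le_div_iff₀ (mul_pos hη0 (pow_pos hδ0 2))]
      nlinarith
    have h32 : 32 * Real.log (4 / (η * δ ^ 2)) ≤ (q:ℝ) * ε ^ 2 := by
      rw [div_le_iff₀ (pow_pos hε 2)] at hq2
      linarith
    have hb1 : β ≤ Real.exp (-(2 * Real.log (4 / (η * δ ^ 2)))) := by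
      rw [hβdef]
      apply Real.exp_le_exp.2
      linarith
    have hb3 : Real.exp (-(2 * Real.log (4 / (η * δ ^ 2)))) = (η * δ ^ 2 / 4) ^ 2 := by
      rw [hlogeq, show -(2 * - Real.log (η * δ ^ 2 / 4)) = 2 * Real.log (η * δ ^ 2 / 4)
        from by ring]
      rw [show (2:ℝ) * Real.log (η * δ ^ 2 / 4) = ((2:ℕ):ℝ) * Real.log (η * δ ^ 2 / 4)
        from by norm_num]
      rw [Real.exp_nat_mul, Real.exp_log hx0]
    have hb4 : (η * δ ^ 2 / 4) ^ 2 ≤ (η * δ ^ 2 / 4) / 2 := by nlinarith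
    have : (η * δ ^ 2 / 4) / 2 = η * δ ^ 2 / 8 := by ring
    linarith [hb1, hb3.le, hb3.ge]
  -- the feasible-value set
  set A := { v : ℝ | ∃ (T : Finset (Θ → ℝ)) (γ : (Θ → ℝ) → ℝ),
      (∀ p ∈ T, (∀ θ, 0 ≤ p θ) ∧ (∑ θ, p θ = 1)) ∧
      (∀ p ∈ T, 0 ≤ γ p) ∧ (∑ p ∈ T, γ p = 1) ∧
      (∀ θ, ∑ p ∈ T, γ p * p θ = μ θ) ∧
      v = ∑ p ∈ T, γ p * Wdistrict dist (bestResp u 0 p) } with hA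
  have hW01 : ∀ c : R → Bool, 0 ≤ Wdistrict dist c ∧ Wdistrict dist c ≤ 1 := by
    intro c
    rw [Wdistrict]
    split <;> norm_num
  have hAmem : ∀ v ∈ A, 0 ≤ v ∧ v ≤ 1 := by
    rintro v ⟨T, γ, hT, hγ0, hγ1, hmean, rfl⟩
    constructor
    · exact Finset.sum_nonneg fun pp hpp => mul_nonneg (hγ0 pp hpp) (hW01 _).1
    · have h1 : ∑ pp ∈ T, γ pp * Wdistrict dist (bestResp u 0 pp) ≤ ∑ pp ∈ T, γ pp :=
        Finset.sum_le_sum fun pp hpp => by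
          have := (hW01 (bestResp u 0 pp)).2
          have h0 := hγ0 pp hpp
          nlinarith
      rw [hγ1] at h1
      exact h1
  have hne : A.Nonempty := by
    refine ⟨Wdistrict dist (bestResp u 0 μ), {μ}, fun _ => 1, ?_, ?_, ?_, ?_, ?_⟩
    · intro pp hpp
      rw [Finset.mem_singleton] at hpp
      subst hpp
      exact ⟨hμ0, hμ1⟩
    · intro pp _; norm_num
    · simp
    · intro θ; simp
    · simp
  have hbdd : BddAbove A := ⟨1, fun v hv => (hAmem v hv).2⟩
  -- choose a near-optimal scheme
  obtain ⟨v, hvA, hkey⟩ : ∃ v ∈ A, (1 - η) * sSup A ≤ (1 - η / 2) * v := by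
    by_cases h0 : (1 - η) * sSup A ≤ 0
    · obtain ⟨v, hv⟩ := hne
      exact ⟨v, hv, le_trans h0 (mul_nonneg (by linarith) (hAmem v hv).1)⟩
    · push_neg at h0
      have hSup0 : 0 < sSup A := by
        by_contra h
        push_neg at h
        have h1η : 0 ≤ 1 - η := by linarith
        nlinarith
      have h1η : 0 < 1 - η := by
        by_contra h
        push_neg at h
        have hs := le_csSup hbdd hne.some_mem
        have := (hAmem _ hne.some_mem).1
        nlinarith
      have hlt : (1 - η) * sSup A / (1 - η / 2) < sSup A := by
        rw [div_lt_iff₀ (by linarith)]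
        nlinarith
      obtain ⟨v, hvA, hvgt⟩ := exists_lt_of_lt_csSup hne hlt
      refine ⟨v, hvA, ?_⟩
      rw [div_lt_iff₀ (by linarith : (0:ℝ) < 1 - η / 2)] at hvgt
      nlinarith
  obtain ⟨T, γ, hTpost, hγ0, hγ1, hγmean, hvdef⟩ := hvA
  -- the q-uniform empirical scheme
  set S : Finset (Θ → ℝ) := (univ : Finset (Fin q → Θ)).image (empD q) with hS
  set γε : (Θ → ℝ) → ℝ := fun p' => ∑ pp ∈ T, γ pp *
      ∑ ω ∈ univ.filter (fun ω : Fin q → Θ => empD q ω = p'), pwt q pp ω with hγε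
  have Lsum : ∀ f : (Θ → ℝ) → ℝ, ∑ p' ∈ S, γε p' * f p'
      = ∑ pp ∈ T, γ pp * ∑ ω : Fin q → Θ, pwt q pp ω * f (empD q ω) := by
    intro f
    have h1 : ∀ p', γε p' * f p' = ∑ pp ∈ T, γ pp *
        ∑ ω ∈ univ.filter (fun ω : Fin q → Θ => empD q ω = p'),
          pwt q pp ω * f (empD q ω) := by
      intro p'
      rw [hγε]
      rw [Finset.sum_mul]
      refine Finset.sum_congr rfl fun pp _ => ?_
      rw [mul_assoc]
      congr 1
      rw [Finset.sum_mul]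
      refine Finset.sum_congr rfl fun ω hω => ?_
      rw [(Finset.mem_filter.1 hω).2]
    rw [Finset.sum_congr rfl fun p' _ => h1 p', Finset.sum_comm]
    refine Finset.sum_congr rfl fun pp _ => ?_
    rw [← Finset.mul_sum]
    congr 1
    exact Finset.sum_fiberwise_of_maps_to
      (fun ω _ => Finset.mem_image_of_mem (empD q) (Finset.mem_univ ω)) _
  refine ⟨S, γε, ?_, ?_, ?_, ?_, ?_⟩
  · intro p' hp'
    obtain ⟨ω, _, rfl⟩ := Finset.mem_image.1 hp'
    exact ⟨fun θ => empD_nonneg ω θ, empD_sum hq ω, fun θ => ⟨cntD q ω θ, rfl⟩⟩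
  · intro p' hp'
    refine Finset.sum_nonneg fun pp hpp => mul_nonneg (hγ0 pp hpp) ?_
    exact Finset.sum_nonneg fun ω _ => pwt_nonneg (hTpost pp hpp).1 ω
  · have h2 := Lsum (fun _ => 1)
    simp only [mul_one] at h2
    rw [h2]
    rw [Finset.sum_congr rfl fun pp hpp => by
      rw [sum_pwt (hTpost pp hpp).2, mul_one]]
    exact hγ1
  · intro θ
    have h2 := Lsum (fun p' => p' θ)
    rw [h2]
    rw [Finset.sum_congr rfl fun pp hpp => by
      rw [sum_pwt_empD hq (hTpost pp hpp).2 θ]]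
    exact hγmean θ
  · have h2 := Lsum (fun p' => Wdd dist δ (bestResp u ε p'))
    rw [h2]
    have hstep : ∀ pp ∈ T, γ pp * ((1 - η / 2) * Wdistrict dist (bestResp u 0 pp))
        ≤ γ pp * ∑ ω : Fin q → Θ, pwt q pp ω * Wdd dist δ (bestResp u ε (empD q ω)) :=
      fun pp hpp => mul_le_mul_of_nonneg_left
        (key_step dist u hu hδ0 hδ1 hε hη0 hη1 hq hβ (hTpost pp hpp).1 (hTpost pp hpp).2)
        (hγ0 pp hpp)
    have h3 : (1 - η / 2) * v
        = ∑ pp ∈ T, γ pp * ((1 - η / 2) * Wdistrict dist (bestResp u 0 pp)) := by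
      rw [hvdef, Finset.mul_sum]
      exact Finset.sum_congr rfl fun pp _ => by ring
    calc (1 - η) * sSup A ≤ (1 - η / 2) * v := hkey
      _ = ∑ pp ∈ T, γ pp * ((1 - η / 2) * Wdistrict dist (bestResp u 0 pp)) := h3
      _ ≤ ∑ pp ∈ T, γ pp * ∑ ω : Fin q → Θ, pwt q pp ω
            * Wdd dist δ (bestResp u ε (empD q ω)) := Finset.sum_le_sum hstep
end
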